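/- arXiv:2112.14728 — 10 statements merged into one kernel-verified Lean document; each statement's English description precedes it below -/
import Mathlib

section
/- Let $F$ be a field equipped with a nonarchimedean absolute value $|\cdot|$ such that $0 < |2| < 1$, and let $a, b \in F$ satisfy $a^2 = 2$ and $b^2 = -1$. Then $|a - 1 - b| = |2|^{3/4}$. -/
/-- If `0 < |2| < 1`, `a² = 2` and `b² = -1`, then
`|a - 1 - b| = |2|^(3/4)`. -/
theorem abs_sqrt_two_sub_one_add_i {F : Type*} [Field F]
    (v : AbsoluteValue F ℝ) (hna : IsNonarchimedean v)
    (h2pos : 0 < v 2) (h2lt : v 2 < 1)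
    (a b : F) (ha : a ^ 2 = 2) (hb : b ^ 2 = -1) :
    v (a - 1 - b) = v 2 ^ ((3 : ℝ) / 4) := by
  -- |b| = 1
  have hvb : v b = 1 := by
    have h : v b ^ 2 = 1 := by
      rw [← map_pow, hb, v.map_neg, map_one]
    nlinarith [v.nonneg b]
  -- |1+b|^2 = |2|
  have h1b : v (1 + b) ^ 2 = v 2 := by
    have h : (1 + b) ^ 2 = 2 * b := by linear_combination hb
    rw [← map_pow, h, map_mul, hvb, mul_one]
  -- |a| < 1
  have hva : v a ^ 2 = v 2 := by rw [← map_pow, ha]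
  have hvalt : v a < 1 := by nlinarith [v.nonneg a]
  -- |1 - a| = 1
  have h1ma : v (1 - a) = 1 := by
    have hle : v (1 - a) ≤ 1 := by
      have h := hna 1 (-a)
      rw [map_one, v.map_neg] at h
      rw [sub_eq_add_neg]
      exact h.trans (max_le le_rfl hvalt.le)
    have hge : (1 : ℝ) ≤ v (1 - a) := by
      have h1 : (1 : F) = (1 - a) + a := by ring
      have := hna (1 - a) a
      rw [← h1, map_one] at this
      rcases le_max_iff.mp this with h | h
      · exact h
      · linarith
    linarith
  -- (a-1-b)^2 = 2(1+b)(1-a)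
  have hx2 : v (a - 1 - b) ^ 2 = v 2 * v (1 + b) := by
    have h : (a - 1 - b) ^ 2 = 2 * ((1 + b) * (1 - a)) := by
      linear_combination ha + hb
    rw [← map_pow, h, map_mul, map_mul, h1ma, mul_one]
  -- fourth power
  have hy4 : v (a - 1 - b) ^ 4 = v 2 ^ 3 := by
    have : v (a - 1 - b) ^ 4 = (v (a - 1 - b) ^ 2) ^ 2 := by ring
    rw [this, hx2, mul_pow, h1b]; ring
  have h0 : (0 : ℝ) ≤ v (a - 1 - b) := v.nonneg _
  have ht : (0 : ℝ) ≤ v 2 := h2pos.le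
  calc v (a - 1 - b)
      = (v (a - 1 - b) ^ (4 : ℕ)) ^ ((1 : ℝ) / 4) := by
        rw [← Real.rpow_natCast _ 4, ← Real.rpow_mul h0]; norm_num
    _ = (v 2 ^ (3 : ℕ)) ^ ((1 : ℝ) / 4) := by rw [hy4]
    _ = v 2 ^ ((3 : ℝ) / 4) := by
        rw [← Real.rpow_natCast (v 2) 3, ← Real.rpow_mul ht]; norm_num
end

section
/- Let $F$ be a field equipped with a nonarchimedean absolute value $|\cdot|$ such that $0 < |2| < 1$, and let $a, b \in F$ satisfy $a^2 = 2$ and $b^2 = -1$. Then the four closed discs $\{z \in F : |z - a| \le |2|^2\}$, $\{z \in F : |z + a| \le |2|^2\}$, $\{z \in F : |z - (1+b)| \le |2|^{3/2}\}$, and $\{z \in F : |z - (1-b)| \le |2|^{3/2}\}$ are pairwise disjoint. -/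
/-- With `0 < |2| < 1`, `a² = 2`, `b² = -1`, the four closed discs
`{|z - a| ≤ |2|²}`, `{|z + a| ≤ |2|²}`, `{|z - (1+b)| ≤ |2|^(3/2)}`,
`{|z - (1-b)| ≤ |2|^(3/2)}` are pairwise disjoint. -/
theorem schottky_discs_pairwise_disjoint {F : Type*} [Field F]
    (v : AbsoluteValue F ℝ) (hna : IsNonarchimedean v)
    (h2pos : 0 < v 2) (h2lt : v 2 < 1)
    (a b : F) (ha : a ^ 2 = 2) (hb : b ^ 2 = -1)
    (D : Fin 4 → Set F)
    (hD0 : D 0 = {z : F | v (z - a) ≤ v 2 ^ 2})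
    (hD1 : D 1 = {z : F | v (z + a) ≤ v 2 ^ 2})
    (hD2 : D 2 = {z : F | v (z - (1 + b)) ≤ v 2 ^ ((3 : ℝ) / 2)})
    (hD3 : D 3 = {z : F | v (z - (1 - b)) ≤ v 2 ^ ((3 : ℝ) / 2)}) :
    ∀ i j : Fin 4, i ≠ j → Disjoint (D i) (D j) := by
  set s := Real.sqrt (v 2) with hs
  have hs0 : 0 < s := Real.sqrt_pos.2 h2pos
  have hr : v 2 = s ^ 2 := (Real.sq_sqrt h2pos.le).symm
  have hs1 : s < 1 := by nlinarith
  have hva : v a = s := by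
    have h : v a ^ 2 = s ^ 2 := by rw [← map_pow, ha, ← hr]
    nlinarith [v.nonneg a]
  have hvb : v b = 1 := by
    have h : v b ^ 2 = 1 := by rw [← map_pow, hb, v.map_neg, map_one]
    nlinarith [v.nonneg b]
  have h1b : v (1 + b) = s := by
    have hid : (1 + b) ^ 2 = 2 * b := by linear_combination hb
    have h : v (1 + b) ^ 2 = s ^ 2 := by
      rw [← map_pow, hid, v.map_mul, hvb, mul_one, hr]
    nlinarith [v.nonneg (1 + b)]
  have h1b' : v (1 - b) = s := by
    have hid : (1 - b) ^ 2 = -(2 * b) := by linear_combination hb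
    have h : v (1 - b) ^ 2 = s ^ 2 := by
      rw [← map_pow, hid, v.map_neg, v.map_mul, hvb, mul_one, hr]
    nlinarith [v.nonneg (1 - b)]
  have hrad : v 2 ^ ((3 : ℝ) / 2) = s ^ 3 := by
    rw [show ((3 : ℝ) / 2) = 1 + 1 / 2 by norm_num, Real.rpow_add h2pos,
      Real.rpow_one, ← Real.sqrt_eq_rpow, ← hs, hr]; ring
  have hs4 : v 2 ^ 2 = s ^ 4 := by rw [hr]; ring
  have p43 : s ^ 4 < s ^ 3 := by
    calc s ^ 4 = s ^ 3 * s := by ring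
      _ < s ^ 3 * 1 := mul_lt_mul_of_pos_left hs1 (pow_pos hs0 3)
      _ = s ^ 3 := by ring
  have p32 : s ^ 3 < s ^ 2 := by
    calc s ^ 3 = s ^ 2 * s := by ring
      _ < s ^ 2 * 1 := mul_lt_mul_of_pos_left hs1 (pow_pos hs0 2)
      _ = s ^ 2 := by ring
  have p42 : s ^ 4 < s ^ 2 := p43.trans p32
  have cross : ∀ c e : F, c ^ 2 = 2 → e ^ 2 = -1 → v c = s → v (1 + e) = s →
      v (1 - e) = s → s ^ 2 ≤ v (c - (1 + e)) := by
    intro c e hc he hvc hv1 hv2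
    have hid : (c - (1 + e)) * (c + (1 + e)) = 2 * (1 - e) := by
      linear_combination hc - he
    have hprod : v (c - (1 + e)) * v (c + (1 + e)) = s ^ 3 := by
      rw [← v.map_mul, hid, v.map_mul, hr, hv2]; ring
    have hsum : v (c + (1 + e)) ≤ s := by
      have h := hna c (1 + e)
      rw [hvc, hv1, max_self] at h; exact h
    have hy0 : 0 < v (c + (1 + e)) := by
      by_contra h
      push_neg at h
      have h0 : v (c + (1 + e)) = 0 := le_antisymm h (v.nonneg _)
      rw [h0, mul_zero] at hprod
      nlinarith
    nlinarith [v.nonneg (c - (1 + e))]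
  have disj : ∀ (c d : F) (r1 r2 : ℝ), r1 < v (c - d) → r2 < v (c - d) →
      Disjoint {z : F | v (z - c) ≤ r1} {z : F | v (z - d) ≤ r2} := by
    intro c d r1 r2 h1 h2
    rw [Set.disjoint_left]
    intro z hz1 hz2
    simp only [Set.mem_setOf_eq] at hz1 hz2
    have key : v (c - d) ≤ max (v (c - z)) (v (z - d)) := by
      have h := hna (c - z) (z - d)
      rwa [sub_add_sub_cancel] at h
    rw [v.map_sub c z] at key
    rcases le_max_iff.1 key with h | h
    · exact absurd (h.trans hz1) (not_le.2 h1)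
    · exact absurd (h.trans hz2) (not_le.2 h2)
  -- distances between centers
  have dAA : v (a - -a) = s ^ 3 := by
    rw [sub_neg_eq_add, ← two_mul, v.map_mul, hr, hva]; ring
  have dBB : v ((1 + b) - (1 - b)) = s ^ 2 := by
    have hid : (1 + b) - (1 - b) = 2 * b := by ring
    rw [hid, v.map_mul, hr, hvb]; ring
  have hnegb : (-b) ^ 2 = (-1 : F) := by rw [neg_sq]; exact hb
  have hnega : (-a) ^ 2 = (2 : F) := by rw [neg_sq]; exact ha
  have hvna : v (-a) = s := by rw [v.map_neg]; exact hva
  have c1 : s ^ 2 ≤ v (a - (1 + b)) := cross a b ha hb hva h1b h1b'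
  have c2 : s ^ 2 ≤ v (a - (1 - b)) := by
    have h := cross a (-b) ha hnegb hva
      (by rw [← sub_eq_add_neg]; exact h1b') (by rw [sub_neg_eq_add]; exact h1b)
    rwa [← sub_eq_add_neg] at h
  have c3 : s ^ 2 ≤ v (-a - (1 + b)) := cross (-a) b hnega hb hvna h1b h1b'
  have c4 : s ^ 2 ≤ v (-a - (1 - b)) := by
    have h := cross (-a) (-b) hnega hnegb hvna
      (by rw [← sub_eq_add_neg]; exact h1b') (by rw [sub_neg_eq_add]; exact h1b)
    rwa [← sub_eq_add_neg] at h
  have hD1' : D 1 = {z : F | v (z - -a) ≤ v 2 ^ 2} := by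
    rw [hD1]; simp only [sub_neg_eq_add]
  have d01 : Disjoint (D 0) (D 1) := by
    rw [hD0, hD1']
    exact disj a (-a) _ _ (by rw [hs4, dAA]; exact p43) (by rw [hs4, dAA]; exact p43)
  have d23 : Disjoint (D 2) (D 3) := by
    rw [hD2, hD3]
    exact disj (1 + b) (1 - b) _ _ (by rw [hrad, dBB]; exact p32)
      (by rw [hrad, dBB]; exact p32)
  have d02 : Disjoint (D 0) (D 2) := by
    rw [hD0, hD2]
    exact disj a (1 + b) _ _ (by rw [hs4]; exact lt_of_lt_of_le p42 c1)
      (by rw [hrad]; exact lt_of_lt_of_le p32 c1)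
  have d03 : Disjoint (D 0) (D 3) := by
    rw [hD0, hD3]
    exact disj a (1 - b) _ _ (by rw [hs4]; exact lt_of_lt_of_le p42 c2)
      (by rw [hrad]; exact lt_of_lt_of_le p32 c2)
  have d12 : Disjoint (D 1) (D 2) := by
    rw [hD1', hD2]
    exact disj (-a) (1 + b) _ _ (by rw [hs4]; exact lt_of_lt_of_le p42 c3)
      (by rw [hrad]; exact lt_of_lt_of_le p32 c3)
  have d13 : Disjoint (D 1) (D 3) := by
    rw [hD1', hD3]
    exact disj (-a) (1 - b) _ _ (by rw [hs4]; exact lt_of_lt_of_le p42 c4)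
      (by rw [hrad]; exact lt_of_lt_of_le p32 c4)
  intro i j hij
  fin_cases i <;> fin_cases j <;>
    first
      | exact absurd rfl hij
      | exact d01 | exact d01.symm
      | exact d02 | exact d02.symm
      | exact d03 | exact d03.symm
      | exact d12 | exact d12.symm
      | exact d13 | exact d13.symm
      | exact d23 | exact d23.symm
end

section
/- Let $F$ be a field equipped with a nonarchimedean absolute value $|\cdot|$ such that $0 < |2| < 1$, let $a \in F$ satisfy $a^2 = 2$, and set $P = \begin{pmatrix} -a & -a \\ -1 & 1\end{pmatrix}$, $A = \begin{pmatrix} 2 & 0 \\ 0 & 1 \end{pmatrix}$, $\gamma_1 = P A P^{-1} \in GL_2(F)$. Then for every $z \in F$ with $|z - a| > |2|^2$, the Möbius image $\gamma_1 \cdot z$ is defined (its denominator is nonzero) and satisfies $|\gamma_1 \cdot z + a| < |2|^2$. That is, $\gamma_1$ maps the complement of the closed disc of radius $|2|^2$ around $a$ into the open disc of radius $|2|^2$ around $-a$. -/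
/-- With `0 < |2| < 1` and `a² = 2`, let
`γ₁ = P A P⁻¹` where `P = !![-a, -a; -1, 1]` and `A = !![2, 0; 0, 1]`.
Then `γ₁` maps the complement of the closed disc of radius `|2|²` around `a`
into the open disc of radius `|2|²` around `-a` (and the Möbius image is defined). -/
theorem gamma_one_maps_disc_complement {F : Type*} [Field F]
    (v : AbsoluteValue F ℝ) (hna : IsNonarchimedean v)
    (h2pos : 0 < v 2) (h2lt : v 2 < 1)
    (a : F) (ha : a ^ 2 = 2)
    (γ : Matrix (Fin 2) (Fin 2) F)
    (hγ : γ = !![-a, -a; -1, 1] * !![2, 0; 0, 1] * !![-a, -a; -1, 1]⁻¹) :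
    ∀ z : F, v 2 ^ 2 < v (z - a) →
      γ 1 0 * z + γ 1 1 ≠ 0 ∧
      v ((γ 0 0 * z + γ 0 1) / (γ 1 0 * z + γ 1 1) + a) < v 2 ^ 2 := by
  have h2 : (2:F) ≠ 0 := by
    intro h; rw [h] at h2pos; simp at h2pos
  have ha0 : a ≠ 0 := by
    intro h; rw [h] at ha; simp at ha; exact h2 ha.symm
  -- compute γ explicitly
  have hγ' : γ = !![3/2, a/2; (2*a)⁻¹, 3/2] := by
    have hinv : (!![-a, -a; -1, 1] : Matrix (Fin 2) (Fin 2) F)⁻¹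
        = !![-(2*a)⁻¹, -(1/2:F); -(2*a)⁻¹, 1/2] := by
      apply Matrix.inv_eq_right_inv
      ext i j
      fin_cases i <;> fin_cases j <;>
        simp [Matrix.mul_apply, Fin.sum_univ_two] <;> field_simp <;> ring
    rw [hγ, hinv]
    ext i j
    fin_cases i <;> fin_cases j <;>
      simp [Matrix.mul_apply, Fin.sum_univ_two] <;> field_simp <;> ring
  -- ultrametric "strong triangle equality" helper
  have key : ∀ x y : F, v y < v x → v (x + y) = v x := by
    intro x y h
    refine le_antisymm ((hna x y).trans (max_le le_rfl h.le)) ?_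
    by_contra hlt
    push_neg at hlt
    have : v x ≤ max (v (x + y)) (v (-y)) := by
      have := hna (x + y) (-y); simpa using this
    rw [v.map_neg] at this
    exact absurd (lt_of_le_of_lt this (max_lt hlt h)) (lt_irrefl _)
  intro z hz
  have dpos : 0 < v (z - a) := lt_trans (pow_pos h2pos 2) hz
  have hva2 : v a ^ 2 = v 2 := by rw [← map_pow, ha]
  have hva_pos : 0 < v a := v.pos ha0
  have hva1 : v a < 1 := by nlinarith
  have h4 : v (4:F) = v 2 ^ 2 := by
    rw [show (4:F) = 2^2 by norm_num, map_pow]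
  have h4a : v (4*a) = v 2 ^ 2 * v a := by rw [map_mul, h4]
  have hz3a_eq : v (z + 3*a) = v (z - a) := by
    rw [show z + 3*a = (z - a) + 4*a by ring]
    apply key
    rw [h4a]
    nlinarith
  have hz3a0 : z + 3*a ≠ 0 := by
    intro h
    rw [h, map_zero] at hz3a_eq
    exact absurd hz3a_eq.symm dpos.ne'
  have hden : γ 1 0 * z + γ 1 1 = (z + 3*a)/(2*a) := by
    rw [hγ']
    simp [Matrix.cons_val_zero, Matrix.cons_val_one]
    field_simp
  have hden0 : γ 1 0 * z + γ 1 1 ≠ 0 := by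
    rw [hden]
    exact div_ne_zero hz3a0 (mul_ne_zero h2 ha0)
  refine ⟨hden0, ?_⟩
  have hE : (γ 0 0 * z + γ 0 1) / (γ 1 0 * z + γ 1 1) + a
      = 4*a*(z+a)/(z+3*a) := by
    rw [hden, hγ']
    simp [Matrix.cons_val_zero, Matrix.cons_val_one]
    field_simp
    ring
  rw [hE, map_div₀, map_mul, h4a, hz3a_eq]
  have hmax : v (z + a) ≤ max (v (z - a)) (v 2 * v a) := by
    have := hna (z - a) (2*a)
    rw [show (z - a) + 2*a = z + a by ring, map_mul] at this
    exact this
  rw [div_lt_iff₀ dpos]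
  have hva2' : v a * v a = v 2 := by rw [← hva2]; ring
  rcases le_total (v (z - a)) (v 2 * v a) with h | h
  · rw [max_eq_right h] at hmax
    have step1 : v 2 ^ 2 * v a * v (z + a) ≤ v 2 ^ 2 * v a * (v 2 * v a) :=
      mul_le_mul_of_nonneg_left hmax (by positivity)
    have step2 : v 2 ^ 2 * v a * (v 2 * v a) = v 2 ^ 2 * v 2 ^ 2 := by
      rw [show v 2 ^ 2 * v a * (v 2 * v a) = v 2 ^ 2 * v 2 * (v a * v a) from by ring,
        hva2']; ring
    have step3 : v 2 ^ 2 * v 2 ^ 2 < v 2 ^ 2 * v (z - a) :=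
      mul_lt_mul_of_pos_left hz (by positivity)
    linarith
  · rw [max_eq_left h] at hmax
    have step1 : v 2 ^ 2 * v a * v (z + a) ≤ v 2 ^ 2 * v a * v (z - a) :=
      mul_le_mul_of_nonneg_left hmax (by positivity)
    nlinarith [mul_pos (mul_pos (pow_pos h2pos 2) dpos) (sub_pos.mpr hva1)]
end

section
/- Let $F$ be a field equipped with a nonarchimedean absolute value $|\cdot|$ such that $0 < |2| < 1$, let $b \in F$ satisfy $b^2 = -1$, and set $Q = \begin{pmatrix} -1-b & 1-b \\ -1 & 1\end{pmatrix}$, $A = \begin{pmatrix} 2 & 0 \\ 0 & 1 \end{pmatrix}$, $\gamma_2 = Q A Q^{-1} \in GL_2(F)$. Then for every $z \in F$ with $|z - (1+b)| > |2|^{3/2}$, the Möbius image $\gamma_2 \cdot z$ is defined (its denominator is nonzero) and satisfies $|\gamma_2 \cdot z - (1-b)| < |2|^{3/2}$. That is, $\gamma_2$ maps the complement of the closed disc of radius $|2|^{3/2}$ around $1+b$ into the open disc of radius $|2|^{3/2}$ around $1-b$. -/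
/-!
Explicitly `γ₂ = ½ [[3 - b, 2b], [-b, 3 + b]]`, and with `w = z - (1 + b)` one finds
`γ₂ · z - (1 - b) = 4 (w + 2b) / (4 - b w)`. Once `|w| > |2|^{3/2} > |4|`, the denominator has
absolute value `|w|` and the numerator at most `|4| · max (|w|, |2|)`; the two resulting bounds
`|4|` and `|2|³ / |w| < |2|³ / |2|^{3/2}` both lie below `|2|^{3/2}`.
-/

theorem Real.sq_lt_rpow_three_halves {t : ℝ} (ht0 : 0 < t) (ht1 : t < 1) :
    t ^ 2 < t ^ ((3 : ℝ) / 2) := by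
  exact_mod_cast Real.rpow_lt_rpow_of_exponent_gt ht0 ht1 (by norm_num : (3 : ℝ) / 2 < 2)

theorem Real.sq_mul_max_div_lt_rpow_three_halves {t s : ℝ} (ht0 : 0 < t) (ht1 : t < 1)
    (hs : t ^ ((3 : ℝ) / 2) < s) : t ^ 2 * max s t / s < t ^ ((3 : ℝ) / 2) := by
  set r := t ^ ((3 : ℝ) / 2)
  have hr : 0 < r := Real.rpow_pos_of_pos ht0 _
  have hrr : r * r = t ^ 3 := by
    rw [← Real.rpow_add ht0]; norm_num
  rw [div_lt_iff₀ (hr.trans hs)]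
  rcases le_total t s with hts | hst
  · rw [max_eq_left hts]
    exact mul_lt_mul_of_pos_right (Real.sq_lt_rpow_three_halves ht0 ht1) (hr.trans hs)
  · rw [max_eq_right hst]
    calc t ^ 2 * t = r * r := by rw [hrr]; ring
      _ < r * s := mul_lt_mul_of_pos_left hs hr

theorem AbsoluteValue.apply_eq_one_of_sq_eq_neg_one {R : Type*} [Ring R] [IsDomain R]
    (v : AbsoluteValue R ℝ) {b : R} (hb : b ^ 2 = -1) : v b = 1 := by
  refine (pow_eq_one_iff_of_nonneg (v.nonneg b) two_ne_zero).mp ?_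
  rw [← map_pow, hb, v.map_neg, map_one]

namespace GenusTwoSchottky

variable {F : Type*} [Field F] {b : F}

theorem conjMatrix_inv (hb : b ^ 2 = -1) (h2 : (2 : F) ≠ 0) :
    (!![-1 - b, 1 - b; -1, 1] : Matrix (Fin 2) (Fin 2) F)⁻¹
      = !![b / 2, (-1 - b) / 2; b / 2, (1 - b) / 2] := by
  refine Matrix.inv_eq_right_inv ?_
  ext i j
  fin_cases i <;> fin_cases j <;> simp <;> field_simp <;> grind

theorem gammaTwo_eq (hb : b ^ 2 = -1) (h2 : (2 : F) ≠ 0) :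
    !![-1 - b, 1 - b; -1, 1] * !![2, 0; 0, 1] * !![-1 - b, 1 - b; -1, 1]⁻¹
      = !![(3 - b) / 2, b; -b / 2, (3 + b) / 2] := by
  rw [conjMatrix_inv hb h2]
  ext i j
  fin_cases i <;> fin_cases j <;> simp <;> field_simp <;> grind

theorem gammaTwo_denom_eq (hb : b ^ 2 = -1) (h2 : (2 : F) ≠ 0) (z : F) :
    -b / 2 * z + (3 + b) / 2 = (4 - b * (z - (1 + b))) / 2 := by
  field_simp
  linear_combination -hb

theorem gammaTwo_apply_sub (hb : b ^ 2 = -1) (h2 : (2 : F) ≠ 0) (z : F)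
    (hz : 4 - b * (z - (1 + b)) ≠ 0) :
    ((3 - b) / 2 * z + b) / (-b / 2 * z + (3 + b) / 2) - (1 - b)
      = 4 * (z - (1 + b) + 2 * b) / (4 - b * (z - (1 + b))) := by
  rw [gammaTwo_denom_eq hb h2]
  field_simp
  linear_combination (b - z) * hb

end GenusTwoSchottky

/-- With `0 < |2| < 1` and `b² = -1`, let
`γ₂ = Q A Q⁻¹` where `Q = !![-1-b, 1-b; -1, 1]` and `A = !![2, 0; 0, 1]`.
Then `γ₂` maps the complement of the closed disc of radius `|2|^(3/2)` around `1+b`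
into the open disc of radius `|2|^(3/2)` around `1-b` (and the Möbius image is defined). -/
theorem gamma_two_maps_disc_complement {F : Type*} [Field F]
    (v : AbsoluteValue F ℝ) (hna : IsNonarchimedean v)
    (h2pos : 0 < v 2) (h2lt : v 2 < 1)
    (b : F) (hb : b ^ 2 = -1)
    (γ : Matrix (Fin 2) (Fin 2) F)
    (hγ : γ = !![-1 - b, 1 - b; -1, 1] * !![2, 0; 0, 1] * !![-1 - b, 1 - b; -1, 1]⁻¹) :
    ∀ z : F, v 2 ^ ((3 : ℝ) / 2) < v (z - (1 + b)) →
      γ 1 0 * z + γ 1 1 ≠ 0 ∧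
      v ((γ 0 0 * z + γ 0 1) / (γ 1 0 * z + γ 1 1) - (1 - b)) < v 2 ^ ((3 : ℝ) / 2) := by
  intro z hz
  have h2 : (2 : F) ≠ 0 := v.pos_iff.mp h2pos
  have hvb : v b = 1 := v.apply_eq_one_of_sq_eq_neg_one hb
  have hv4 : v 4 = v 2 ^ 2 := by rw [← map_pow]; norm_num
  set w := z - (1 + b)
  have hvbw : v (-(b * w)) = v w := by rw [v.map_neg, map_mul, hvb, one_mul]
  have hvden : v (4 - b * w) = v w := by
    rw [sub_eq_add_neg, hna.add_eq_right_of_lt, hvbw]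
    rw [hvbw, hv4]
    exact (Real.sq_lt_rpow_three_halves h2pos h2lt).trans hz
  have hden : 4 - b * w ≠ 0 := by
    rw [← v.pos_iff, hvden]
    exact (Real.rpow_pos_of_pos h2pos _).trans hz
  have hnum : v (w + 2 * b) ≤ max (v w) (v 2) := by
    simpa [hvb] using hna w (2 * b)
  subst hγ
  simp only [GenusTwoSchottky.gammaTwo_eq hb h2, Matrix.of_apply, Matrix.cons_val',
    Matrix.cons_val_zero, Matrix.cons_val_one, Matrix.empty_val', Matrix.cons_val_fin_one]
  refine ⟨by rw [GenusTwoSchottky.gammaTwo_denom_eq hb h2]; exact div_ne_zero hden h2, ?_⟩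
  rw [GenusTwoSchottky.gammaTwo_apply_sub hb h2 z hden, map_div₀, map_mul, hv4, hvden]
  calc v 2 ^ 2 * v (w + 2 * b) / v w ≤ v 2 ^ 2 * max (v w) (v 2) / v w := by gcongr
    _ < v 2 ^ ((3 : ℝ) / 2) := Real.sq_mul_max_div_lt_rpow_three_halves h2pos h2lt hz
end

section
/- Let $F$ be a field equipped with a nonarchimedean absolute value $|\cdot|$ such that $0 < |2| < 1$, and let $a, b \in F$ satisfy $a^2 = 2$ and $b^2 = -1$. With $P = \begin{pmatrix} -a & -a \\ -1 & 1\end{pmatrix}$, $Q = \begin{pmatrix} -1-b & 1-b \\ -1 & 1\end{pmatrix}$, $A = \begin{pmatrix} 2 & 0 \\ 0 & 1 \end{pmatrix}$, set $\gamma_1 = P A P^{-1}$ and $\gamma_2 = Q A Q^{-1}$ in $GL_2(F)$. Then the images of $\gamma_1$ and $\gamma_2$ in $PGL_2(F) = GL_2(F)/\mathrm{center}$ generate a free group of rank 2; equivalently, the group homomorphism from the free group on two generators to $GL_2(F)/\mathrm{center}$ sending the generators to the classes of $\gamma_1$ and $\gamma_2$ is injective. -/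
/-!
Let `γ` have left eigenvectors `![1, p]` and `![1, q]` with eigenvalues `k`, `l`, `|k| < |l|`.
In the chart `z = w₀ / w₁` of `ℙ¹(F)` it multiplies the ratio `|z + p| / |z + q|` by `|k / l|`,
so it maps the complement of the disc `{|z + q| < |z + p|}` into the disc `{|z + p| < |z + q|}`,
and `γ⁻¹` does the reverse. For a nonarchimedean absolute value the first disc is the ball of
radius `|p - q|` about `-p`. For `γ₁` and `γ₂` the eigenvalue ratio is `2`, the fixed points are
`±a` and `1 ± b`, and `|2a|, |2b| ≤ |2| ≤ |(±a) - (1 ± b)|`: the two discs of `γ₁` are disjoint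
from the two discs of `γ₂`, and the ping-pong lemma applies to the action of `PGL₂(F)` on
`ℙ¹(F)`.
-/

open Matrix MatrixGroups Projectivization Pointwise
open scoped LinearAlgebra.Projectivization

universe u

/-- `FreeGroup.injective_lift_of_ping_pong` with the group in an arbitrary universe. -/
theorem FreeGroup.injective_lift_of_ping_pong' {ι : Type} [Nontrivial ι] {G : Type u} [Group G]
    {α : Type*} [MulAction G α] (a : ι → G) (X Y : ι → Set α)
    (hXnonempty : ∀ i, (X i).Nonempty) (hXdisj : Pairwise (Function.onFun Disjoint X))
    (hYdisj : Pairwise (Function.onFun Disjoint Y)) (hXYdisj : ∀ i j, Disjoint (X i) (Y j))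
    (hX : ∀ i, a i • (Y i)ᶜ ⊆ X i) (hY : ∀ i, a⁻¹ i • (X i)ᶜ ⊆ Y i) :
    Function.Injective (FreeGroup.lift a) := by
  have hulift : FreeGroup.lift a = (FreeGroup.lift fun i : ULift.{u} ι => a i.down).comp
      (FreeGroup.freeGroupCongr Equiv.ulift.symm).toMonoidHom := by
    ext i
    simp
  rw [hulift]
  exact (FreeGroup.injective_lift_of_ping_pong _ (X ∘ ULift.down) (Y ∘ ULift.down)
    (fun i => hXnonempty i.down) (fun _ _ hij => hXdisj (ULift.down_injective.ne hij))
    (fun _ _ hij => hYdisj (ULift.down_injective.ne hij)) (fun i j => hXYdisj i.down j.down)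
    (fun i => hX i.down) (fun i => hY i.down)).comp (MulEquiv.injective _)

theorem Matrix.vecMul_mul_mul_nonsing_inv_eq_smul {R n : Type*} [CommRing R] [Fintype n]
    [DecidableEq n] {M D : Matrix n n R} (hM : IsUnit M.det) {r : n → R} {k : R}
    (h : r ᵥ* M ᵥ* D = k • (r ᵥ* M)) : r ᵥ* (M * D * M⁻¹) = k • r := by
  rw [← vecMul_vecMul, ← vecMul_vecMul, h, smul_vecMul, vecMul_vecMul, mul_nonsing_inv _ hM,
    vecMul_one]

theorem Matrix.vecMul_inv_eq_inv_smul {K n : Type*} [Field K] [Fintype n] [DecidableEq n]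
    {g : GL n K} {r : n → K} {c : K} (hr : r ≠ 0) (h : r ᵥ* (g : Matrix n n K) = c • r) :
    c ≠ 0 ∧ r ᵥ* ((g⁻¹ : GL n K) : Matrix n n K) = c⁻¹ • r := by
  have hr' : r = c • (r ᵥ* ((g⁻¹ : GL n K) : Matrix n n K)) := by
    rw [← smul_vecMul, ← h, vecMul_vecMul, ← Units.val_mul, mul_inv_cancel, Units.val_one,
      vecMul_one]
  have hc : c ≠ 0 := by
    rintro rfl
    exact hr (by rw [hr', zero_smul])
  exact ⟨hc, (eq_inv_smul_iff₀ hc).mpr hr'.symm⟩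

section

variable {F : Type*} [Field F] (v : AbsoluteValue F ℝ)

/-- In the chart `z = w₀ / w₁` of `ℙ¹`, this is the set `|z + p| < |z + q|`; for a
nonarchimedean `v` it is the open disc of radius `|p - q|` about `-p`. -/
def schottkyDisc (p q : F) : Set (ℙ F (Fin 2 → F)) :=
  {x | v (![1, p] ⬝ᵥ x.rep) < v (![1, q] ⬝ᵥ x.rep)}

/-- `g` acts on `ℙ¹` with attracting fixed point `-p` and repelling fixed point `-q`
(in the chart `z = w₀ / w₁`). -/
def IsLoxodromicWith (g : GL (Fin 2) F) (p q : F) : Prop :=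
  ∃ k l : F, v k < v l ∧ ![1, p] ᵥ* (g : Matrix (Fin 2) (Fin 2) F) = k • ![1, p] ∧
    ![1, q] ᵥ* (g : Matrix (Fin 2) (Fin 2) F) = l • ![1, q]

variable {v}

theorem mk_mem_schottkyDisc {p q : F} {w : Fin 2 → F} (hw : w ≠ 0) :
    mk F w hw ∈ schottkyDisc v p q ↔ v (![1, p] ⬝ᵥ w) < v (![1, q] ⬝ᵥ w) := by
  obtain ⟨u, hu⟩ := exists_smul_eq_mk_rep F w hw
  simp only [schottkyDisc, Set.mem_ofPred_eq, ← hu, Units.smul_def, dotProduct_smul, smul_eq_mul,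
    map_mul]
  exact mul_lt_mul_iff_right₀ (v.pos u.ne_zero)

theorem eq_zero_of_dotProduct_eq_zero {p q : F} (hpq : p ≠ q) {w : Fin 2 → F}
    (hp : ![1, p] ⬝ᵥ w = 0) (hq : ![1, q] ⬝ᵥ w = 0) : w = 0 := by
  simp only [vec2_dotProduct, Matrix.cons_val_zero, Matrix.cons_val_one, one_mul] at hp hq
  have h1 : w 1 = 0 := by
    have : (p - q) * w 1 = 0 := by linear_combination hp - hq
    simpa [sub_ne_zero.mpr hpq] using this
  ext i
  fin_cases i
  · simpa [h1] using hp
  · simpa using h1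

theorem schottkyDisc_nonempty {p q : F} (hpq : p ≠ q) : (schottkyDisc v p q).Nonempty := by
  have hw : ![-p, 1] ≠ 0 := fun h => by simpa using congrFun h 1
  refine ⟨mk F _ hw, (mk_mem_schottkyDisc hw).mpr ?_⟩
  simpa [vec2_dotProduct, neg_add_eq_sub, sub_eq_zero] using hpq.symm

theorem disjoint_schottkyDisc_swap (p q : F) :
    Disjoint (schottkyDisc v p q) (schottkyDisc v q p) :=
  Set.disjoint_left.mpr fun _ (h : v _ < v _) h' => lt_asymm h h'

theorem apply_dotProduct_lt_of_lt (hna : IsNonarchimedean v) {p q : F} {w : Fin 2 → F}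
    (h : v (![1, p] ⬝ᵥ w) < v (![1, q] ⬝ᵥ w)) : v (![1, p] ⬝ᵥ w) < v (p - q) * v (w 1) := by
  by_contra! hle
  have hsplit : ![1, q] ⬝ᵥ w = ![1, p] ⬝ᵥ w + (q - p) * w 1 := by
    simp only [vec2_dotProduct, Matrix.cons_val_zero, Matrix.cons_val_one]
    ring
  have := hna (![1, p] ⬝ᵥ w) ((q - p) * w 1)
  rw [← hsplit, map_mul, v.map_sub, max_eq_left hle] at this
  exact this.not_gt h

theorem disjoint_schottkyDisc (hna : IsNonarchimedean v) {p q p' q' : F} {ρ : ℝ}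
    (hρ : v (p - q) ≤ ρ) (hρ' : v (p' - q') ≤ ρ) (hsep : ρ ≤ v (p - p')) :
    Disjoint (schottkyDisc v p q) (schottkyDisc v p' q') := by
  refine Set.disjoint_left.mpr fun x hx hx' => ?_
  set w := x.rep
  have hdiff : (p - p') * w 1 = ![1, p] ⬝ᵥ w + -(![1, p'] ⬝ᵥ w) := by
    simp only [vec2_dotProduct, Matrix.cons_val_zero, Matrix.cons_val_one]
    ring
  have hbound : ∀ {p q : F}, v (p - q) ≤ ρ → v (![1, p] ⬝ᵥ w) < v (![1, q] ⬝ᵥ w) →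
      v (![1, p] ⬝ᵥ w) < ρ * v (w 1) := fun hρ h =>
    (apply_dotProduct_lt_of_lt hna h).trans_le (mul_le_mul_of_nonneg_right hρ (v.nonneg _))
  have := calc v (p - p') * v (w 1) = v ((p - p') * w 1) := (map_mul ..).symm
    _ ≤ max (v (![1, p] ⬝ᵥ w)) (v (![1, p'] ⬝ᵥ w)) := by
      rw [hdiff, ← v.map_neg (![1, p'] ⬝ᵥ w)]
      exact hna _ _
    _ < ρ * v (w 1) := max_lt (hbound hρ hx) (hbound hρ' hx')
    _ ≤ v (p - p') * v (w 1) := mul_le_mul_of_nonneg_right hsep (v.nonneg _)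
  exact lt_irrefl _ this

theorem isLoxodromicWith_of_coe_eq {g : GL (Fin 2) F} {x y k l : F} (hxy : x + y ≠ 0)
    (hkl : v k < v l)
    (hg : (g : Matrix (Fin 2) (Fin 2) F) = !![x, y; -1, 1] * !![k, 0; 0, l] * !![x, y; -1, 1]⁻¹) :
    IsLoxodromicWith v g (-y) x := by
  have hdet : IsUnit !![x, y; -1, 1].det := by simpa [det_fin_two_of] using hxy
  refine ⟨k, l, hkl, ?_, ?_⟩ <;> rw [hg] <;> refine vecMul_mul_mul_nonsing_inv_eq_smul hdet ?_ <;>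
    ext i <;> fin_cases i <;> simp [vecMul] <;> ring

namespace IsLoxodromicWith

variable {g : GL (Fin 2) F} {p q : F}

theorem ne (hg : IsLoxodromicWith v g p q) : p ≠ q := by
  rintro rfl
  obtain ⟨k, l, hkl, hk, hl⟩ := hg
  have : k = l := by simpa using congrFun (hk.symm.trans hl) 0
  exact hkl.ne (congrArg v this)

theorem inv (hg : IsLoxodromicWith v g p q) : IsLoxodromicWith v g⁻¹ q p := by
  obtain ⟨k, l, hkl, hk, hl⟩ := hg
  have hrow : ∀ x : F, ![1, x] ≠ 0 := fun x h => by simpa using congrFun h 0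
  obtain ⟨hk0, hk'⟩ := vecMul_inv_eq_inv_smul (hrow p) hk
  obtain ⟨-, hl'⟩ := vecMul_inv_eq_inv_smul (hrow q) hl
  refine ⟨l⁻¹, k⁻¹, ?_, hl', hk'⟩
  rw [map_inv₀, map_inv₀]
  exact inv_strictAnti₀ (v.pos hk0) hkl

theorem smul_compl_schottkyDisc_subset (hg : IsLoxodromicWith v g p q) :
    ProjGenLinGroup.mk g • (schottkyDisc v q p)ᶜ ⊆ schottkyDisc v p q := by
  obtain ⟨k, l, hkl, hk, hl⟩ := id hg
  rintro _ ⟨x, hx, rfl⟩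
  induction x using Projectivization.ind with | h w hw => ?_
  rw [Set.mem_compl_iff, mk_mem_schottkyDisc, not_lt] at hx
  have hq : ![1, q] ⬝ᵥ w ≠ 0 := by
    intro h0
    rw [h0, map_zero] at hx
    exact hw (eq_zero_of_dotProduct_eq_zero hg.ne (v.eq_zero.mp (le_antisymm hx (v.nonneg _))) h0)
  dsimp only
  rw [PGL.mk_smul_mk, mk_mem_schottkyDisc]
  change v (_ ⬝ᵥ (_ *ᵥ w)) < v (_ ⬝ᵥ (_ *ᵥ w))
  rw [dotProduct_mulVec, dotProduct_mulVec, hk, hl, smul_dotProduct, smul_dotProduct, smul_eq_mul,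
    smul_eq_mul, map_mul, map_mul]
  calc v k * v (![1, p] ⬝ᵥ w) ≤ v k * v (![1, q] ⬝ᵥ w) := mul_le_mul_of_nonneg_left hx (v.nonneg k)
    _ < v l * v (![1, q] ⬝ᵥ w) := mul_lt_mul_of_pos_right hkl (v.pos hq)

end IsLoxodromicWith

theorem injective_lift_of_isLoxodromicWith (hna : IsNonarchimedean v) {ι : Type} [Nontrivial ι]
    {g : ι → GL (Fin 2) F} {p q : ι → F} {ρ : ℝ} (hg : ∀ i, IsLoxodromicWith v (g i) (p i) (q i))
    (hρ : ∀ i, v (p i - q i) ≤ ρ)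
    (hsep : Pairwise fun i j =>
      ∀ e ∈ ({p i, q i} : Set F), ∀ f ∈ ({p j, q j} : Set F), ρ ≤ v (e - f)) :
    Function.Injective (ProjGenLinGroup.mk.comp (FreeGroup.lift g)) := by
  have hlift : ProjGenLinGroup.mk.comp (FreeGroup.lift g) =
      FreeGroup.lift (ProjGenLinGroup.mk ∘ g) := by
    ext i
    simp
  have hρ' : ∀ i, v (q i - p i) ≤ ρ := fun i => v.map_sub (p i) (q i) ▸ hρ i
  rw [hlift]
  refine FreeGroup.injective_lift_of_ping_pong' _ (fun i => schottkyDisc v (p i) (q i))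
    (fun i => schottkyDisc v (q i) (p i)) (fun i => schottkyDisc_nonempty (hg i).ne)
    (fun i j hij => disjoint_schottkyDisc hna (hρ i) (hρ j) (hsep hij _ (by simp) _ (by simp)))
    (fun i j hij => disjoint_schottkyDisc hna (hρ' i) (hρ' j) (hsep hij _ (by simp) _ (by simp)))
    (fun i j => ?_) (fun i => (hg i).smul_compl_schottkyDisc_subset)
    (fun i => by simpa [← map_inv] using (hg i).inv.smul_compl_schottkyDisc_subset)
  rcases eq_or_ne i j with rfl | hij
  · exact disjoint_schottkyDisc_swap _ _
  · exact disjoint_schottkyDisc hna (hρ i) (hρ' j) (hsep hij _ (by simp) _ (by simp))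

theorem injective_lift_fin_two_of_isLoxodromicWith (hna : IsNonarchimedean v)
    {g₁ g₂ : GL (Fin 2) F} {p₁ q₁ p₂ q₂ : F} {ρ : ℝ} (hg₁ : IsLoxodromicWith v g₁ p₁ q₁)
    (hg₂ : IsLoxodromicWith v g₂ p₂ q₂) (hρ₁ : v (p₁ - q₁) ≤ ρ) (hρ₂ : v (p₂ - q₂) ≤ ρ)
    (hsep : ∀ e ∈ ({p₁, q₁} : Set F), ∀ f ∈ ({p₂, q₂} : Set F), ρ ≤ v (e - f)) :
    Function.Injective (ProjGenLinGroup.mk.comp (FreeGroup.lift ![g₁, g₂])) := by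
  refine injective_lift_of_isLoxodromicWith hna (p := ![p₁, p₂]) (q := ![q₁, q₂])
    (fun i => by fin_cases i <;> assumption) (fun i => by fin_cases i <;> assumption) ?_
  intro i j hij
  fin_cases i <;> fin_cases j
  · exact absurd rfl hij
  · exact hsep
  · intro e he f hf
    rw [v.map_sub]
    exact hsep f hf e he
  · exact absurd rfl hij

theorem IsNonarchimedean.apply_sq_sub_sq_le (hna : IsNonarchimedean v) (e f : F) :
    v (e ^ 2 - f ^ 2) ≤ max (v e) (v f) * v (e - f) := by
  rw [sq_sub_sq, map_mul]
  exact mul_le_mul_of_nonneg_right (hna e f) (v.nonneg _)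

theorem IsNonarchimedean.apply_two_le_apply_sub (hna : IsNonarchimedean v) {e f : F}
    (he : e ^ 2 = 2) (hf : (f + 1) ^ 2 = -1) : v 2 ≤ v (e - f) := by
  -- `e`, `f` and `f + 2` all have absolute value `√|2|`, and `e ^ 2 - f ^ 2 = 2 * (f + 2)`.
  have hve : v e ^ 2 = v 2 := by rw [← map_pow, he]
  have hf1 : v (f + 1) = 1 :=
    (pow_eq_one_iff_of_nonneg (v.nonneg _) two_ne_zero).mp (by rw [← map_pow, hf, v.map_neg,
      map_one])
  have hroot : ∀ {x : F}, v x ^ 2 = v 2 → v x = v e := fun hx =>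
    (pow_left_inj₀ (v.nonneg _) (v.nonneg e) two_ne_zero).mp (hx.trans hve.symm)
  have hvf : v f = v e := hroot (by
    rw [← map_pow, show f ^ 2 = -(2 * (f + 1)) by linear_combination hf, v.map_neg, map_mul, hf1,
      mul_one])
  have hvf2 : v (f + 2) = v e := hroot (by
    rw [← map_pow, show (f + 2) ^ 2 = 2 * (f + 1) by linear_combination hf, map_mul, hf1, mul_one])
  have hsq : v (e ^ 2 - f ^ 2) = v e * v 2 := by
    rw [show e ^ 2 - f ^ 2 = 2 * (f + 2) by linear_combination he - hf, map_mul, hvf2, mul_comm]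
  have := hna.apply_sq_sub_sq_le e f
  rw [hsq, hvf, max_self] at this
  rcases (v.nonneg e).eq_or_lt with he0 | he0
  · rw [← hve, ← he0]
    simp
  · exact le_of_mul_le_mul_left this he0

end

/-- With `0 < |2| < 1`, `a² = 2`, `b² = -1`, the images in
`PGL₂(F) = GL₂(F)/center` of `γ₁ = P A P⁻¹` and `γ₂ = Q A Q⁻¹` generate a free group
of rank 2: the homomorphism from the free group on two generators to `GL₂(F)/center`
sending the generators to the classes of `γ₁` and `γ₂` is injective. -/
theorem schottky_group_free_of_rank_two {F : Type*} [Field F]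
    (v : AbsoluteValue F ℝ) (hna : IsNonarchimedean v)
    (h2pos : 0 < v 2) (h2lt : v 2 < 1)
    (a b : F) (ha : a ^ 2 = 2) (hb : b ^ 2 = -1)
    (g₁ g₂ : (Matrix (Fin 2) (Fin 2) F)ˣ)
    (hg₁ : (g₁ : Matrix (Fin 2) (Fin 2) F) =
      !![-a, -a; -1, 1] * !![2, 0; 0, 1] * !![-a, -a; -1, 1]⁻¹)
    (hg₂ : (g₂ : Matrix (Fin 2) (Fin 2) F) =
      !![-1 - b, 1 - b; -1, 1] * !![2, 0; 0, 1] * !![-1 - b, 1 - b; -1, 1]⁻¹) :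
    Function.Injective
      ((QuotientGroup.mk' (Subgroup.center (Matrix (Fin 2) (Fin 2) F)ˣ)).comp
        (FreeGroup.lift ![g₁, g₂])) := by
  have h2 : (2 : F) ≠ 0 := fun h => by simp [h] at h2pos
  have ha1 : v a ≤ 1 := by
    have : v a ^ 2 ≤ 1 := by rw [← map_pow, ha]; exact h2lt.le
    exact (pow_le_one_iff_of_nonneg (v.nonneg a) two_ne_zero).mp this
  have hb1 : v b = 1 :=
    (pow_eq_one_iff_of_nonneg (v.nonneg b) two_ne_zero).mp (by rw [← map_pow, hb, v.map_neg,
      map_one])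
  have ha0 : a ≠ 0 := fun h => h2 (by simpa [h] using ha.symm)
  have hb0 : b ≠ 0 := fun h => by simp [h] at hb
  have hl₁ : IsLoxodromicWith v g₁ (-(-a)) (-a) := isLoxodromicWith_of_coe_eq
    (by rw [show -a + -a = -(2 * a) by ring, neg_ne_zero]; exact mul_ne_zero h2 ha0) (by rwa [map_one]) hg₁
  have hl₂ : IsLoxodromicWith v g₂ (-(1 - b)) (-1 - b) := isLoxodromicWith_of_coe_eq
    (by rw [show -1 - b + (1 - b) = -(2 * b) by ring, neg_ne_zero]; exact mul_ne_zero h2 hb0)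
    (by rwa [map_one]) hg₂
  refine injective_lift_fin_two_of_isLoxodromicWith hna hl₁ hl₂ (ρ := v 2) ?_ ?_ ?_
  · rw [show -(-a) - -a = 2 * a by ring, map_mul]
    exact mul_le_of_le_one_right h2pos.le ha1
  · rw [show -(1 - b) - (-1 - b) = 2 * b by ring, map_mul, hb1, mul_one]
  · rintro e he f hf
    refine hna.apply_two_le_apply_sub ?_ ?_
    · rcases he with rfl | rfl <;> linear_combination ha
    · rcases hf with rfl | rfl <;> linear_combination hb
end

section
/- Let $L$ be a field in which $2 \neq 0$, let $b \in L$ satisfy $b^2 = -1$, and let $\tau$ be a ring automorphism of $L$ with $\tau(b) = -b$. Set $Q = \begin{pmatrix} -1-b & 1-b \\ -1 & 1\end{pmatrix}$, $A = \begin{pmatrix} 2 & 0 \\ 0 & 1 \end{pmatrix}$, and $\gamma_2 = Q A Q^{-1} \in GL_2(L)$. Then applying $\tau$ entrywise to $\gamma_2$ yields $2 \cdot \gamma_2^{-1}$, i.e. $\gamma_2^{\tau} = 2\,\gamma_2^{-1}$ as matrices; in particular, the entrywise $\tau$-image of $\gamma_2$ equals $\gamma_2^{-1}$ in $PGL_2(L)$.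 -/
/-!
Write `γ = Q A Q⁻¹`. Since `τ b = -b`, the Galois conjugate of `Q` is `Q R` with
`R = !![0, -1; -1, 0]`, and conjugating by `R` swaps the diagonal entries of `A`, i.e. gives
`tr A - A`. Hence `γ^τ = Q (tr A - A) Q⁻¹ = tr γ - γ`, which for a `2 × 2` matrix is the
adjugate `det γ • γ⁻¹ = 2 • γ⁻¹`.
-/

namespace Matrix

variable {n R S : Type*} [Fintype n] [DecidableEq n] [CommRing R] [CommRing S]

section RingHom

variable {F : Type*} [FunLike F R S] [RingHomClass F R S] (f : F)

theorem map_nonsing_inv {Q : Matrix n n R} (hQ : IsUnit Q.det) : Q⁻¹.map f = (Q.map f)⁻¹ :=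
  (inv_eq_right_inv <| by
    rw [← Matrix.map_mul, mul_nonsing_inv _ hQ, Matrix.map_one _ (map_zero f) (map_one f)]).symm

theorem map_conj {Q : Matrix n n R} (hQ : IsUnit Q.det) (A : Matrix n n R) :
    (Q * A * Q⁻¹).map f = Q.map f * A.map f * (Q.map f)⁻¹ := by
  rw [Matrix.map_mul, Matrix.map_mul, map_nonsing_inv f hQ]

end RingHom

theorem conj_mul_eq_conj_conj (Q P A : Matrix n n R) :
    Q * P * A * (Q * P)⁻¹ = Q * (P * A * P⁻¹) * Q⁻¹ := by
  simp only [mul_inv_rev, Matrix.mul_assoc]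

theorem conj_smul_one_sub {Q : Matrix n n R} (hQ : IsUnit Q.det) (c : R) (A : Matrix n n R) :
    Q * (c • 1 - A) * Q⁻¹ = c • 1 - Q * A * Q⁻¹ := by
  rw [Matrix.mul_sub, Matrix.sub_mul, Matrix.mul_smul, Matrix.smul_mul, Matrix.mul_one,
    mul_nonsing_inv _ hQ]

theorem adjugate_fin_two_eq_trace_smul_one_sub (A : Matrix (Fin 2) (Fin 2) R) :
    adjugate A = trace A • 1 - A := by
  ext i j
  fin_cases i <;> fin_cases j <;> simp [adjugate_fin_two, trace_fin_two]

theorem det_smul_nonsing_inv {A : Matrix n n R} (hA : IsUnit A.det) :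
    A.det • A⁻¹ = adjugate A := by
  rw [inv_def, smul_smul, Ring.mul_inverse_cancel _ hA, one_smul]

end Matrix

open Matrix

/-- Let `L` be a field with `2 ≠ 0`, `b² = -1`, and `τ` a ring
automorphism with `τ b = -b`. With `γ₂ = Q A Q⁻¹`, `Q = !![-1-b, 1-b; -1, 1]`,
`A = !![2, 0; 0, 1]`, applying `τ` entrywise to `γ₂` yields `2 • γ₂⁻¹`. -/
theorem gamma_two_galois_conjugate {L : Type*} [Field L]
    (h2 : (2 : L) ≠ 0) (b : L) (hb : b ^ 2 = -1)
    (τ : L ≃+* L) (hτb : τ b = -b)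
    (γ : Matrix (Fin 2) (Fin 2) L)
    (hγ : γ = !![-1 - b, 1 - b; -1, 1] * !![2, 0; 0, 1] * !![-1 - b, 1 - b; -1, 1]⁻¹) :
    γ.map τ = (2 : L) • γ⁻¹ := by
  set Q : Matrix (Fin 2) (Fin 2) L := !![-1 - b, 1 - b; -1, 1]
  set A : Matrix (Fin 2) (Fin 2) L := !![2, 0; 0, 1]
  set R : Matrix (Fin 2) (Fin 2) L := !![0, -1; -1, 0]
  have hb0 : b ≠ 0 := by rintro rfl; norm_num at hb
  have hQ : IsUnit Q.det := by
    rw [det_fin_two_of, isUnit_iff_ne_zero]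
    ring_nf
    exact neg_ne_zero.mpr (mul_ne_zero hb0 h2)
  have hQ' : IsUnit Q := (isUnit_iff_isUnit_det Q).mpr hQ
  have hdet : γ.det = 2 := by rw [hγ, det_conj hQ', det_fin_two_of]; norm_num
  have hQτ : Q.map τ = Q * R := by
    ext i j; fin_cases i <;> fin_cases j <;> simp [Q, R, hτb] <;> ring
  have hAτ : A.map τ = A := by
    ext i j; fin_cases i <;> fin_cases j <;> simp [A, map_ofNat]
  have hRA : R * A * R⁻¹ = A.trace • 1 - A := by
    ext i j; fin_cases i <;> fin_cases j <;> simp [R, A, inv_def]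
  calc γ.map τ = Q * (R * A * R⁻¹) * Q⁻¹ := by
        rw [hγ, map_conj τ hQ, hQτ, hAτ, conj_mul_eq_conj_conj]
    _ = γ.trace • 1 - γ := by rw [hRA, conj_smul_one_sub hQ, hγ, trace_conj hQ']
    _ = γ.det • γ⁻¹ := by
        rw [det_smul_nonsing_inv (hdet ▸ h2.isUnit), adjugate_fin_two_eq_trace_smul_one_sub]
    _ = (2 : L) • γ⁻¹ := by rw [hdet]
end

section
/- Let $L$ be a field in which $2 \neq 0$, let $a, b \in L$ satisfy $a^2 = 2$ and $b^2 = -1$, and let $\sigma, \tau$ be ring automorphisms of $L$ with $\sigma(a) = -a$, $\sigma(b) = b$, $\tau(a) = a$, $\tau(b) = -b$. With $P = \begin{pmatrix} -a & -a \\ -1 & 1\end{pmatrix}$, $Q = \begin{pmatrix} -1-b & 1-b \\ -1 & 1\end{pmatrix}$, $A = \begin{pmatrix} 2 & 0 \\ 0 & 1 \end{pmatrix}$, let $\Gamma$ be the subgroup of $PGL_2(L) = GL_2(L)/\mathrm{center}$ generated by the classes of $\gamma_1 = P A P^{-1}$ and $\gamma_2 = Q A Q^{-1}$. Then the group automorphisms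 of $PGL_2(L)$ induced by applying $\sigma$ (respectively $\tau$) to all matrix entries map $\Gamma$ onto $\Gamma$. -/
/-!
Both conjugators are moved by the relevant Galois automorphism only by a column swap:
`σ P = P S` and `τ Q = Q S` with `S = !![0, -1; -1, 0]`, while `τ P = P` and `σ Q = Q`.
Since `S A S A = 2` for `A = diag(2, 1)`, this gives `σ γ₁ · γ₁ = 2 = τ γ₂ · γ₂`, so in
`PGL₂(L)` the automorphism `σ` inverts `γ₁` and fixes `γ₂`, and `τ` fixes `γ₁` and inverts
`γ₂`. Either way the generating pair of `Γ` is sent to a generating pair of `Γ`.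
-/

open Matrix

theorem Subgroup.closure_pair_inv_left {G : Type*} [Group G] (x y : G) :
    closure {x⁻¹, y} = closure {x, y} := by
  rw [Set.insert_eq, closure_union, closure_singleton_inv, ← closure_union, ← Set.insert_eq]

section Conjugation

variable {n R : Type*} [Fintype n] [DecidableEq n] [CommRing R]

theorem Matrix.map_nonsing_inv_s10 {S : Type*} [CommRing S] (f : R →+* S) {P : Matrix n n R}
    (hP : IsUnit P.det) : P⁻¹.map f = (P.map f)⁻¹ :=
  (inv_eq_right_inv <| by
    rw [← Matrix.map_mul, mul_nonsing_inv _ hP, Matrix.map_one _ f.map_zero f.map_one]).symm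

variable (f : R →+* R) {P D : Matrix n n R}

theorem Matrix.map_conj_s10 (hP : IsUnit P.det) :
    (P * D * P⁻¹).map f = P.map f * D.map f * (P.map f)⁻¹ := by
  rw [Matrix.map_mul, Matrix.map_mul, map_nonsing_inv_s10 f hP]

theorem Matrix.map_conj_eq_self (hP : IsUnit P.det) (hPf : P.map f = P) (hDf : D.map f = D) :
    (P * D * P⁻¹).map f = P * D * P⁻¹ := by
  rw [map_conj_s10 f hP, hPf, hDf]

theorem Matrix.map_conj_mul_conj_eq_smul_one {S : Matrix n n R} {c : R} (hP : IsUnit P.det)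
    (hPf : P.map f = P * S) (hS : S * S = 1) (hDf : D.map f = D) (hSD : S * D * S * D = c • 1) :
    (P * D * P⁻¹).map f * (P * D * P⁻¹) = c • 1 :=
  calc (P * D * P⁻¹).map f * (P * D * P⁻¹)
      = P * (S * D * S * D) * P⁻¹ := by
        rw [map_conj_s10 f hP, hPf, hDf, mul_inv_rev, inv_eq_left_inv hS]
        simp only [Matrix.mul_assoc, nonsing_inv_mul_cancel_left _ _ hP]
    _ = c • 1 := by rw [hSD, mul_smul_comm, Matrix.mul_one, smul_mul_assoc, mul_nonsing_inv _ hP]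

end Conjugation

section ProjectiveLinear

variable {n R : Type*} [Fintype n] [DecidableEq n] [CommRing R] {f : R →+* R}
  {g : (Matrix n n R)ˣ}

theorem Units.map_mapMatrix_eq_self (h : (g : Matrix n n R).map f = g) :
    Units.map f.mapMatrix.toMonoidHom g = g :=
  Units.ext h

theorem QuotientGroup.mk_units_map_mapMatrix_eq_inv {c : R}
    (h : (g : Matrix n n R).map f * g = c • 1) :
    QuotientGroup.mk' (Subgroup.center (Matrix n n R)ˣ) (Units.map f.mapMatrix.toMonoidHom g) =
      (QuotientGroup.mk' (Subgroup.center (Matrix n n R)ˣ) g)⁻¹ := by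
  refine eq_inv_of_mul_eq_one_left ?_
  rw [← map_mul, QuotientGroup.mk'_apply, QuotientGroup.eq_one_iff, Subgroup.mem_center_iff]
  intro x
  ext1
  change (x : Matrix n n R) * ((g : Matrix n n R).map f * g) = (g : Matrix n n R).map f * g * x
  rw [h, mul_smul_comm, smul_mul_assoc, Matrix.mul_one, Matrix.one_mul]

theorem Subgroup.map_closure_pair_units_map_mapMatrix {x y : (Matrix n n R)ˣ} {c : R}
    (hx : (x : Matrix n n R).map f * x = c • 1) (hy : (y : Matrix n n R).map f = y) :
    map ((QuotientGroup.mk' (center (Matrix n n R)ˣ)).comp (Units.map f.mapMatrix.toMonoidHom))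
        (closure {x, y}) =
      map (QuotientGroup.mk' (center (Matrix n n R)ˣ)) (closure {x, y}) := by
  rw [MonoidHom.map_closure, MonoidHom.map_closure, Set.image_pair, Set.image_pair,
    MonoidHom.comp_apply, MonoidHom.comp_apply, QuotientGroup.mk_units_map_mapMatrix_eq_inv hx,
    Units.map_mapMatrix_eq_self hy, closure_pair_inv_left]

end ProjectiveLinear

section FinTwo

variable {R : Type*} [CommRing R]

theorem Matrix.map_fin_two_of {α β : Type*} (f : α → β) (p q r s : α) :
    (!![p, q; r, s]).map f = !![f p, f q; f r, f s] := by
  ext i j; fin_cases i <;> fin_cases j <;> rfl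

theorem Matrix.antidiag_neg_one_mul_self :
    !![0, -1; -1, 0] * !![0, -1; -1, 0] = (1 : Matrix (Fin 2) (Fin 2) R) := by
  simp [one_fin_two]

theorem Matrix.antidiag_neg_one_mul_diag_sq (t : R) :
    !![0, -1; -1, 0] * !![t, 0; 0, 1] * !![0, -1; -1, 0] * !![t, 0; 0, 1] = t • 1 := by
  simp [one_fin_two]

end FinTwo

/-- With `a² = 2`, `b² = -1` and Galois automorphisms `σ, τ`
(`σ a = -a`, `σ b = b`, `τ a = a`, `τ b = -b`), let `Γ` be the subgroup of
`PGL₂(L) = GL₂(L)/center` generated by the classes of `γ₁ = P A P⁻¹` and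
`γ₂ = Q A Q⁻¹`. Then the automorphisms of `PGL₂(L)` induced by applying `σ`
(resp. `τ`) entrywise map `Γ` onto `Γ`. -/
theorem schottky_group_galois_stable {L : Type*} [Field L]
    (h2 : (2 : L) ≠ 0) (a b : L) (ha : a ^ 2 = 2) (hb : b ^ 2 = -1)
    (σ τ : L ≃+* L) (hσa : σ a = -a) (hσb : σ b = b) (hτa : τ a = a) (hτb : τ b = -b)
    (g₁ g₂ : (Matrix (Fin 2) (Fin 2) L)ˣ)
    (hg₁ : (g₁ : Matrix (Fin 2) (Fin 2) L) =
      !![-a, -a; -1, 1] * !![2, 0; 0, 1] * !![-a, -a; -1, 1]⁻¹)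
    (hg₂ : (g₂ : Matrix (Fin 2) (Fin 2) L) =
      !![-1 - b, 1 - b; -1, 1] * !![2, 0; 0, 1] * !![-1 - b, 1 - b; -1, 1]⁻¹) :
    ∀ ρ : L ≃+* L, (ρ = σ ∨ ρ = τ) →
      Subgroup.map
        ((QuotientGroup.mk' (Subgroup.center (Matrix (Fin 2) (Fin 2) L)ˣ)).comp
          (Units.map ρ.toRingHom.mapMatrix.toMonoidHom))
        (Subgroup.closure {g₁, g₂})
      = Subgroup.map (QuotientGroup.mk' (Subgroup.center (Matrix (Fin 2) (Fin 2) L)ˣ))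
          (Subgroup.closure {g₁, g₂}) := by
  have hP : IsUnit (!![-a, -a; -1, 1] : Matrix (Fin 2) (Fin 2) L).det := by
    have ha0 : a ≠ 0 := by rintro rfl; exact h2 (by simpa using ha.symm)
    rw [show det !![-a, -a; -1, 1] = -(2 * a) by rw [det_fin_two_of]; ring]
    exact (mul_ne_zero h2 ha0).isUnit.neg
  have hQ : IsUnit (!![-1 - b, 1 - b; -1, 1] : Matrix (Fin 2) (Fin 2) L).det := by
    have hb0 : b ≠ 0 := by rintro rfl; simp at hb
    rw [show det !![-1 - b, 1 - b; -1, 1] = -(2 * b) by rw [det_fin_two_of]; ring]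
    exact (mul_ne_zero h2 hb0).isUnit.neg
  intro ρ hρ
  have hD : (!![2, 0; 0, 1] : Matrix (Fin 2) (Fin 2) L).map ρ = !![2, 0; 0, 1] := by
    simp [map_fin_two_of, map_ofNat]
  rcases hρ with rfl | rfl
  · have h₁ : (g₁ : Matrix (Fin 2) (Fin 2) L).map ρ * g₁ = (2 : L) • 1 := by
      rw [hg₁]
      refine map_conj_mul_conj_eq_smul_one (ρ : L →+* L) hP ?_ antidiag_neg_one_mul_self hD
        (antidiag_neg_one_mul_diag_sq 2)
      simp [map_fin_two_of, hσa]
    have h₂ : (g₂ : Matrix (Fin 2) (Fin 2) L).map ρ = g₂ := by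
      rw [hg₂]
      exact map_conj_eq_self (ρ : L →+* L) hQ (by simp [map_fin_two_of, hσb]) hD
    exact Subgroup.map_closure_pair_units_map_mapMatrix h₁ h₂
  · have h₁ : (g₁ : Matrix (Fin 2) (Fin 2) L).map ρ = g₁ := by
      rw [hg₁]
      exact map_conj_eq_self (ρ : L →+* L) hP (by simp [map_fin_two_of, hτa]) hD
    have h₂ : (g₂ : Matrix (Fin 2) (Fin 2) L).map ρ * g₂ = (2 : L) • 1 := by
      rw [hg₂]
      refine map_conj_mul_conj_eq_smul_one (ρ : L →+* L) hQ ?_ antidiag_neg_one_mul_self hD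
        (antidiag_neg_one_mul_diag_sq 2)
      simp [map_fin_two_of, hτb, sub_eq_neg_add, add_comm]
    rw [Set.pair_comm]
    exact Subgroup.map_closure_pair_units_map_mapMatrix h₂ h₁
end

section
/- Let $F$ be a field equipped with a nonarchimedean absolute value $|\cdot|$, let $\pi, \zeta, \beta \in F$ and $\rho \in \mathbb{R}$ satisfy $|\zeta| = 1$, $0 < |\pi| < 1$, $\beta \neq 0$, $\rho > 1$, and $|\beta|\rho < 1$. Set $P = \begin{pmatrix} -\pi\zeta & \zeta \\ -1 & 1 \end{pmatrix}$ and $A_0 = P \begin{pmatrix} \beta & 0 \\ 0 & 1\end{pmatrix} P^{-1} \in GL_2(F)$. Then for every $z \in F$ with $|z - \pi\zeta| > |\beta|\rho$, the Möbius image $A_0 \cdot z$ is defined (its denominator is nonzero) and satisfies $|A_0 \cdot z - \zeta| < \rho^{-1}$. That is, $A_0$ maps the complement of the closed disc of radius $|\beta|\rho$ around $\pi\zeta$ into the open disc of radius $\rho^{-1}$ around $\zeta$. -/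
/-!
Write `P = !![-(π ζ), ζ; -1, 1]`, so that `P` sends `0 ↦ ζ`, `∞ ↦ π ζ`, and
`d = det P = ζ (1 - π)` is a unit for `|·|`. Clearing `P⁻¹ = d⁻¹ • adj P`, the Möbius map of
`A₀ = P diag(β, 1) P⁻¹` satisfies
`A₀ · z - ζ = d β (z - ζ) / ((z - π ζ) - β (z - ζ))`.
If `|z - π ζ| > |β| ρ`, the ultrametric inequality gives `|β (z - ζ)| < ρ⁻¹ |z - π ζ| ≤ |z - π ζ|`,
so the denominator has absolute value exactly `|z - π ζ|` and the quotient is below `ρ⁻¹`.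
-/

namespace IsNonarchimedean

variable {R : Type*} [Ring R] {v : AbsoluteValue R ℝ}

lemma sub_eq_left_of_lt (hna : IsNonarchimedean v) {x y : R} (h : v y < v x) :
    v (x - y) = v x := by
  rw [sub_eq_add_neg]
  exact hna.add_eq_left_of_lt (by rwa [map_neg_eq_map])

lemma one_sub_eq_one_of_lt_one [Nontrivial R] (hna : IsNonarchimedean v) {x : R} (h : v x < 1) :
    v (1 - x) = 1 := by
  simpa using hna.sub_eq_left_of_lt (x := 1) (by simpa using h)

lemma mul_sub_lt_inv_mul (hna : IsNonarchimedean v) {β z ζ c : R} {ρ : ℝ} (hρ : 0 < ρ)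
    (hc : v (ζ - c) ≤ 1) (hβρ : v β * ρ < 1) (hz : v β * ρ < v (z - c)) :
    v (β * (z - ζ)) < ρ⁻¹ * v (z - c) := by
  have hzc : 0 < v (z - c) := (by positivity : 0 ≤ v β * ρ).trans_lt hz
  have hβ : v β < ρ⁻¹ := by rwa [← one_div, lt_div_iff₀ hρ]
  have hzζ : v (z - ζ) ≤ max (v (z - c)) 1 := by
    calc v (z - ζ) = v ((z - c) + (c - ζ)) := by rw [sub_add_sub_cancel]
      _ ≤ max (v (z - c)) (v (c - ζ)) := hna _ _
      _ ≤ max (v (z - c)) 1 := max_le_max le_rfl (by rwa [map_sub_rev])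
  calc v (β * (z - ζ)) ≤ v β * max (v (z - c)) 1 := by
        rw [map_mul]; exact mul_le_mul_of_nonneg_left hzζ (v.nonneg β)
    _ = max (v β * v (z - c)) (v β) := by rw [mul_max_of_nonneg _ _ (v.nonneg β), mul_one]
    _ < ρ⁻¹ * v (z - c) := max_lt (by gcongr) (by rwa [inv_mul_eq_div, lt_div_iff₀ hρ])

end IsNonarchimedean

section Conjugate

variable {F : Type*} [Field F]

noncomputable def schottkyConj (π ζ β : F) : Matrix (Fin 2) (Fin 2) F :=
  !![-(π * ζ), ζ; -1, 1] * !![β, 0; 0, 1] * !![-(π * ζ), ζ; -1, 1]⁻¹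

lemma schottkyConj_eq (π ζ β : F) :
    schottkyConj π ζ β = (ζ * (1 - π))⁻¹ •
      !![ζ * (1 - π * β), π * ζ ^ 2 * (β - 1); 1 - β, ζ * (β - π)] := by
  rw [schottkyConj, Matrix.inv_def, Matrix.det_fin_two_of, Matrix.adjugate_fin_two_of,
    Ring.inverse_eq_inv', Matrix.mul_smul]
  congr 1
  · ring
  · ext i j; fin_cases i <;> fin_cases j <;> simp [Matrix.mul_apply, Fin.sum_univ_two] <;> ring

lemma schottkyConj_denom (π ζ β z : F) :
    schottkyConj π ζ β 1 0 * z + schottkyConj π ζ β 1 1 =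
      (ζ * (1 - π))⁻¹ * ((z - π * ζ) - β * (z - ζ)) := by
  simp only [schottkyConj_eq, Matrix.smul_apply, Matrix.of_apply, Matrix.cons_val',
    Matrix.cons_val_one, Matrix.cons_val_zero, Matrix.empty_val', Matrix.cons_val_fin_one,
    smul_eq_mul]
  ring

lemma schottkyConj_numer_sub (π ζ β z : F) (hd : ζ * (1 - π) ≠ 0) :
    schottkyConj π ζ β 0 0 * z + schottkyConj π ζ β 0 1 -
        (schottkyConj π ζ β 1 0 * z + schottkyConj π ζ β 1 1) * ζ = β * (z - ζ) := by
  calc _ = (ζ * (1 - π))⁻¹ * (ζ * (1 - π) * (β * (z - ζ))) := by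
        simp only [schottkyConj_eq, Matrix.smul_apply, Matrix.of_apply, Matrix.cons_val',
          Matrix.cons_val_one, Matrix.cons_val_zero, Matrix.empty_val', Matrix.cons_val_fin_one,
          smul_eq_mul]
        ring
    _ = β * (z - ζ) := inv_mul_cancel_left₀ hd _

end Conjugate

theorem schottky_generator_maps_disc_complement_general {F : Type*} [Field F]
    (v : AbsoluteValue F ℝ) (hna : IsNonarchimedean v)
    (π ζ β : F) (ρ : ℝ)
    (hζ : v ζ = 1) (hπ1 : v π < 1)
    (hρ : 1 < ρ) (hβρ : v β * ρ < 1)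
    (A : Matrix (Fin 2) (Fin 2) F)
    (hA : A = !![-(π * ζ), ζ; -1, 1] * !![β, 0; 0, 1] * !![-(π * ζ), ζ; -1, 1]⁻¹) :
    ∀ z : F, v β * ρ < v (z - π * ζ) →
      A 1 0 * z + A 1 1 ≠ 0 ∧
      v ((A 0 0 * z + A 0 1) / (A 1 0 * z + A 1 1) - ζ) < ρ⁻¹ := by
  intro z hz
  rw [show A = schottkyConj π ζ β from hA]
  have hd : v (ζ * (1 - π)) = 1 := by rw [map_mul, hζ, hna.one_sub_eq_one_of_lt_one hπ1, one_mul]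
  have hd0 : ζ * (1 - π) ≠ 0 := fun h => by simp [h] at hd
  have hw : v (β * (z - ζ)) < ρ⁻¹ * v (z - π * ζ) :=
    hna.mul_sub_lt_inv_mul (by linarith) (by rw [show ζ - π * ζ = ζ * (1 - π) by ring, hd]) hβρ hz
  have hu : 0 < v (z - π * ζ) := (by positivity : 0 ≤ v β * ρ).trans_lt hz
  have huw : v ((z - π * ζ) - β * (z - ζ)) = v (z - π * ζ) :=
    hna.sub_eq_left_of_lt (hw.trans_le (mul_le_of_le_one_left hu.le (inv_le_one_of_one_le₀ hρ.le)))
  have hden : schottkyConj π ζ β 1 0 * z + schottkyConj π ζ β 1 1 ≠ 0 := by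
    rw [schottkyConj_denom]
    exact mul_ne_zero (inv_ne_zero hd0) (v.pos_iff.mp (huw ▸ hu))
  refine ⟨hden, ?_⟩
  rw [div_sub' hden, schottkyConj_numer_sub π ζ β z hd0, schottkyConj_denom, map_div₀,
    map_mul v (ζ * (1 - π))⁻¹, map_inv₀, hd, inv_one, one_mul, huw, div_lt_iff₀ hu]
  exact hw

/-- Let `|ζ| = 1`, `0 < |π| < 1`, `β ≠ 0`, `ρ > 1`, `|β| ρ < 1`, and
`A₀ = P diag(β, 1) P⁻¹` with `P = !![-πζ, ζ; -1, 1]`. Then `A₀` maps the complement of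
the closed disc of radius `|β| ρ` around `πζ` into the open disc of radius `ρ⁻¹`
around `ζ` (and the Möbius image is defined). -/
theorem schottky_generator_maps_disc_complement {F : Type*} [Field F]
    (v : AbsoluteValue F ℝ) (hna : IsNonarchimedean v)
    (π ζ β : F) (ρ : ℝ)
    (hζ : v ζ = 1) (hπ0 : 0 < v π) (hπ1 : v π < 1) (hβ : β ≠ 0)
    (hρ : 1 < ρ) (hβρ : v β * ρ < 1)
    (A : Matrix (Fin 2) (Fin 2) F)
    (hA : A = !![-(π * ζ), ζ; -1, 1] * !![β, 0; 0, 1] * !![-(π * ζ), ζ; -1, 1]⁻¹) :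
    ∀ z : F, v β * ρ < v (z - π * ζ) →
      A 1 0 * z + A 1 1 ≠ 0 ∧
      v ((A 0 0 * z + A 0 1) / (A 1 0 * z + A 1 1) - ζ) < ρ⁻¹ :=
  schottky_generator_maps_disc_complement_general v hna π ζ β ρ hζ hπ1 hρ hβρ A hA
end

section
/- Let $p$ be a prime, and let $F$ be a field with a nonarchimedean absolute value $|\cdot|$. Let $\pi, \zeta, s, t, \beta, \beta' \in F$ satisfy: $\omega := \zeta^p$ is a primitive $p$-th root of unity; $|1 - \zeta| < 1$; $0 < |\pi| < 1$ and $|1 - \omega| = |\pi|$; $|t|^p = |\pi|$; $|s| = |s-1| = 1$; and $0 < |\beta| \le |\pi|^5$, $0 < |\beta'| \le |\pi|^5$. For $0 \le i \le p-1$ set $c_i = \zeta\omega^i$ and $d_i = s + t\omega^i$. Then the $4p$ closed discs $\{z : |z - c_i| \le |\pi| |t|\}$, $\{z : |z - \pi c_i| \le |\beta| (|\pi| |t|)^{-1}\}$, $\{z : |z - d_i| \le |\pi| |t|^2\}$, and $\{z : |z - \pi d_i| \le |\beta'| (|\pi| |t|^2)^{-1}\}$ (for $0 \le i \le p-1$)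 are pairwise disjoint subsets of $F$. -/
/-!
The discs around `cᵢ` and `dᵢ` lie on the unit sphere and are pairwise disjoint: distinct
`p`-th roots of unity are at distance `|1 - ω| = |π|` from each other, `cᵢ` is close to `1`
and `dᵢ` to `s`, and `|1 - s| = 1`, so every pair of centres is farther apart than the radii.
The bound on `|β|, |β'|` makes each disc around `π cᵢ` (resp. `π dᵢ`) the image under `z ↦ π z`
of a subdisc of the one around `cᵢ` (resp. `dᵢ`). Multiplication by `π` is injective and moves
the unit sphere to the sphere of radius `|π| < 1`, so the whole figure is pairwise disjoint.
-/

open Function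

theorem Pairwise.sum_elim {α ι κ : Type*} {r : α → α → Prop} (hr : ∀ a b, r a b → r b a)
    {f : ι → α} {g : κ → α} (hf : Pairwise (r on f)) (hg : Pairwise (r on g))
    (hfg : ∀ i j, r (f i) (g j)) :
    Pairwise (r on Sum.elim f g) := by
  rintro (i | i) (j | j) hij
  · exact hf (Sum.inl_injective.ne_iff.mp hij)
  · exact hfg i j
  · exact hr _ _ (hfg j i)
  · exact hg (Sum.inr_injective.ne_iff.mp hij)

namespace AbsoluteValue

lemma apply_eq_one_of_pow_eq_one {R : Type*} [Semiring R] [Nontrivial R] (v : AbsoluteValue R ℝ)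
    {ω : R} {n : ℕ} (hn : n ≠ 0) (hω : ω ^ n = 1) : v ω = 1 :=
  (pow_eq_one_iff_of_nonneg (v.nonneg ω) hn).mp (by rw [← map_pow, hω, map_one])

variable {F : Type*} [Field F] {v : AbsoluteValue F ℝ}

lemma setOf_apply_sub_mul_le_subset_image {π : F} (hπ : π ≠ 0) (c : F) {r r' : ℝ}
    (hr : r ≤ v π * r') : {z | v (z - π * c) ≤ r} ⊆ (π * ·) '' {w | v (w - c) ≤ r'} := by
  intro z hz
  refine ⟨π⁻¹ * z, ?_, mul_inv_cancel_left₀ hπ z⟩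
  have hscale : v π * v (π⁻¹ * z - c) = v (z - π * c) := by
    rw [← map_mul, mul_sub, mul_inv_cancel_left₀ hπ]
  exact le_of_mul_le_mul_left (hscale ▸ hz.trans hr) (v.pos hπ)

lemma pairwise_disjoint_sum_elim_of_subset_image_mul {ι : Type*} {U V : ι → Set F} {π : F}
    (hπ0 : π ≠ 0) (hπ1 : v π ≠ 1) (hU : Pairwise (Disjoint on U))
    (hU1 : ∀ k, U k ⊆ {z | v z = 1}) (hV : ∀ k, V k ⊆ (π * ·) '' U k) :
    Pairwise (Disjoint on Sum.elim U V) := by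
  refine Pairwise.sum_elim (fun _ _ h => h.symm) hU (fun k l hkl => ?_) fun k l => ?_
  · exact ((Set.disjoint_image_iff (mul_right_injective₀ hπ0)).2 (hU hkl)).mono (hV k) (hV l)
  · refine Set.disjoint_left.2 fun z hzU hzV => hπ1 ?_
    obtain ⟨w, hw, rfl⟩ := hV l hzV
    simpa [show v w = 1 from hU1 l hw] using hU1 k hzU

end AbsoluteValue

namespace IsNonarchimedean

variable {R : Type*} [CommRing R] {v : AbsoluteValue R ℝ}

lemma apply_sub_le_max (hna : IsNonarchimedean v) (x y : R) : v (x - y) ≤ max (v x) (v y) := by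
  simpa [sub_eq_add_neg] using hna x (-y)

lemma apply_eq_of_apply_sub_lt (hna : IsNonarchimedean v) {x c : R} (h : v (x - c) < v c) :
    v x = v c := by
  simpa using hna.add_eq_left_of_lt h

lemma apply_sub_eq_of_apply_sub_lt (hna : IsNonarchimedean v) {x y a b : R}
    (hx : v (x - a) < v (a - b)) (hy : v (y - b) < v (a - b)) : v (x - y) = v (a - b) := by
  have hsmall : v ((x - a) - (y - b)) < v (a - b) :=
    (hna.apply_sub_le_max _ _).trans_lt (max_lt hx hy)
  calc v (x - y) = v ((a - b) + ((x - a) - (y - b))) := by congr 1; ring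
    _ = v (a - b) := hna.add_eq_left_of_lt hsmall

lemma setOf_apply_sub_le_subset (hna : IsNonarchimedean v) {x c : R} {r : ℝ} (hr : r < v c)
    (hx : v (x - c) < v c) : {z | v (z - x) ≤ r} ⊆ {z | v z = v c} := fun z hz => by
  refine hna.apply_eq_of_apply_sub_lt ?_
  calc v (z - c) = v ((z - x) + (x - c)) := by ring_nf
    _ ≤ max (v (z - x)) (v (x - c)) := hna _ _
    _ < v c := max_lt (hz.trans_lt hr) hx

lemma disjoint_setOf_apply_sub_le (hna : IsNonarchimedean v) {x y : R} {r r' : ℝ}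
    (hr : r < v (x - y)) (hr' : r' < v (x - y)) :
    Disjoint {z | v (z - x) ≤ r} {z | v (z - y) ≤ r'} := by
  refine Set.disjoint_left.2 fun z hzx hzy => (lt_irrefl (v (x - y))) ?_
  calc v (x - y) = v ((z - y) - (z - x)) := by congr 1; abel
    _ ≤ max (v (z - y)) (v (z - x)) := hna.apply_sub_le_max _ _
    _ < v (x - y) := max_lt (hzy.trans_lt hr') (hzx.trans_lt hr)

lemma apply_one_sub_pow_le [Nontrivial R] (hna : IsNonarchimedean v) {x : R} (hx : v x ≤ 1)
    (n : ℕ) : v (1 - x ^ n) ≤ v (1 - x) := by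
  induction n with
  | zero => simp
  | succ n ih =>
    calc v (1 - x ^ (n + 1)) = v ((1 - x ^ n) + x ^ n * (1 - x)) := by congr 1; ring
      _ ≤ max (v (1 - x ^ n)) (v (x ^ n * (1 - x))) := hna _ _
      _ ≤ v (1 - x) := max_le ih <| by
        rw [map_mul, map_pow]
        exact mul_le_of_le_one_left (v.nonneg _) (pow_le_one₀ (v.nonneg x) hx)

lemma apply_eq_one_of_apply_one_sub_lt_one [Nontrivial R] (hna : IsNonarchimedean v) {x : R}
    (hx : v (1 - x) < 1) : v x = 1 := by
  simpa using hna.apply_eq_of_apply_sub_lt (x := x) (c := 1) (by simpa [v.map_sub] using hx)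

lemma apply_one_sub_pow_eq_of_coprime [Nontrivial R] (hna : IsNonarchimedean v) {ω : R}
    {n k : ℕ} (hn : 1 < n) (hω : ω ^ n = 1) (hk : k.Coprime n) : v (1 - ω ^ k) = v (1 - ω) := by
  have hω1 : v ω = 1 := v.apply_eq_one_of_pow_eq_one (by omega) hω
  obtain ⟨m, -, hm⟩ := Nat.exists_mul_mod_eq_one_of_coprime hk hn
  have hinv : (ω ^ k) ^ m = ω := by
    rw [← pow_mul, ← Nat.div_add_mod (k * m) n, pow_add, pow_mul, hω, one_pow, one_mul, hm,
      pow_one]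
  refine le_antisymm (hna.apply_one_sub_pow_le hω1.le k) ?_
  calc v (1 - ω) = v (1 - (ω ^ k) ^ m) := by rw [hinv]
    _ ≤ v (1 - ω ^ k) := hna.apply_one_sub_pow_le (by rw [map_pow, hω1, one_pow]) m

lemma apply_pow_sub_pow_of_prime [Nontrivial R] (hna : IsNonarchimedean v) {ω : R} {p : ℕ}
    (hp : p.Prime) (hω : ω ^ p = 1) {i j : Fin p} (hij : i ≠ j) :
    v (ω ^ (i : ℕ) - ω ^ (j : ℕ)) = v (1 - ω) := by
  wlog hlt : i < j generalizing i j
  · rw [v.map_sub]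
    exact this hij.symm (lt_of_le_of_ne (not_lt.mp hlt) hij.symm)
  have hcop : ((j : ℕ) - i).Coprime p :=
    (hp.coprime_iff_not_dvd.mpr (Nat.not_dvd_of_pos_of_lt (by omega) (by omega))).symm
  calc v (ω ^ (i : ℕ) - ω ^ (j : ℕ)) = v (ω ^ (i : ℕ)) * v (1 - ω ^ ((j : ℕ) - i)) := by
        rw [← map_mul, mul_sub, mul_one, ← pow_add, Nat.add_sub_cancel' hlt.le]
    _ = v (1 - ω) := by
        rw [map_pow, v.apply_eq_one_of_pow_eq_one hp.ne_zero hω, one_pow, one_mul,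
          hna.apply_one_sub_pow_eq_of_coprime hp.one_lt hω hcop]

end IsNonarchimedean

lemma mul_inv_le_mul_of_le_pow_five {b q m : ℝ} (hq : 0 < q) (hqm : q ≤ m) (hb : b ≤ q ^ 5) :
    b * (q * m)⁻¹ ≤ q * (q * m) := by
  rw [← div_eq_mul_inv, div_le_iff₀ (mul_pos hq (hq.trans_le hqm))]
  calc b ≤ q ^ 3 * q ^ 2 := by rw [← pow_add]; exact hb
    _ ≤ q ^ 3 * m ^ 2 := by gcongr
    _ = q * (q * m) * (q * m) := by ring

section SchottkyFigure

variable {F : Type*} [Field F]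

/-- The discs of the figure centred at `cᵢ = ζ ωⁱ` (left summand) and `dᵢ = s + t ωⁱ`
(right summand), where `ω = ζ ^ p`. -/
def schottkyUnitDiscs (v : AbsoluteValue F ℝ) (p : ℕ) (π ζ s t : F) : Fin p ⊕ Fin p → Set F :=
  Sum.elim (fun i => {z | v (z - ζ * (ζ ^ p) ^ (i : ℕ)) ≤ v π * v t})
    (fun i => {z | v (z - (s + t * (ζ ^ p) ^ (i : ℕ))) ≤ v π * v t ^ 2})

variable {v : AbsoluteValue F ℝ} (hna : IsNonarchimedean v) {p : ℕ} {π ζ s t : F}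

lemma apply_add_mul_pow_pow_sub_self (hp : p ≠ 0) (hω : (ζ ^ p) ^ p = 1) (i : ℕ) :
    v (s + t * (ζ ^ p) ^ i - s) = v t := by
  rw [add_sub_cancel_left, map_mul, map_pow, v.apply_eq_one_of_pow_eq_one hp hω, one_pow, mul_one]

include hna

lemma apply_mul_pow_pow_sub_one_lt_one (hζ : v (1 - ζ) < 1) (i : ℕ) :
    v (ζ * (ζ ^ p) ^ i - 1) < 1 :=
  calc v (ζ * (ζ ^ p) ^ i - 1) = v (1 - ζ ^ (p * i + 1)) := by rw [v.map_sub]; ring_nf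
    _ ≤ v (1 - ζ) := hna.apply_one_sub_pow_le (hna.apply_eq_one_of_apply_one_sub_lt_one hζ).le _
    _ < 1 := hζ

lemma schottkyUnitDiscs_subset_sphere (hp : p ≠ 0) (hω : (ζ ^ p) ^ p = 1) (hζ : v (1 - ζ) < 1)
    (hπ1 : v π < 1) (ht1 : v t < 1) (hs : v s = 1) (k : Fin p ⊕ Fin p) :
    schottkyUnitDiscs v p π ζ s t k ⊆ {z | v z = 1} := by
  have hπt : v π * v t < 1 := mul_lt_one_of_nonneg_of_lt_one_left (v.nonneg π) hπ1 ht1.le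
  rcases k with i | i
  · intro z hz
    simpa using hna.setOf_apply_sub_le_subset (c := 1) (by simpa using hπt)
      (by simpa using apply_mul_pow_pow_sub_one_lt_one hna hζ i) hz
  · have hr : v π * v t ^ 2 < v s := hs ▸ (mul_le_mul_of_nonneg_left
      (pow_le_of_le_one (v.nonneg t) ht1.le two_ne_zero) (v.nonneg π)).trans_lt hπt
    have hx : v (s + t * (ζ ^ p) ^ (i : ℕ) - s) < v s := by
      rw [apply_add_mul_pow_pow_sub_self hp hω, hs]; exact ht1
    exact hs ▸ hna.setOf_apply_sub_le_subset hr hx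

lemma pairwise_disjoint_schottkyUnitDiscs (hp : p.Prime) (hω : (ζ ^ p) ^ p = 1)
    (hζ : v (1 - ζ) < 1) (hπ0 : 0 < v π) (hπ1 : v π < 1) (hωπ : v (1 - ζ ^ p) = v π) (ht0 : 0 < v t)
    (ht1 : v t < 1) (hs1 : v (s - 1) = 1) :
    Pairwise (Disjoint on schottkyUnitDiscs v p π ζ s t) := by
  have hζ1 : v ζ = 1 := hna.apply_eq_one_of_apply_one_sub_lt_one hζ
  have hπt : v π * v t < v π := mul_lt_of_lt_one_right hπ0 ht1
  have hπt2 : v π * v t ^ 2 < v π * v t := by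
    rw [sq, ← mul_assoc]; exact mul_lt_of_lt_one_right (mul_pos hπ0 ht0) ht1
  refine Pairwise.sum_elim (fun _ _ h => h.symm) (fun i j hij => ?_) (fun i j hij => ?_)
    fun i j => ?_
  · have hdist : v (ζ * (ζ ^ p) ^ (i : ℕ) - ζ * (ζ ^ p) ^ (j : ℕ)) = v π := by
      rw [← mul_sub, map_mul, hζ1, one_mul, hna.apply_pow_sub_pow_of_prime hp hω hij, hωπ]
    exact hna.disjoint_setOf_apply_sub_le (hdist ▸ hπt) (hdist ▸ hπt)
  · have hdist : v ((s + t * (ζ ^ p) ^ (i : ℕ)) - (s + t * (ζ ^ p) ^ (j : ℕ))) = v π * v t := by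
      rw [add_sub_add_left_eq_sub, ← mul_sub, map_mul, hna.apply_pow_sub_pow_of_prime hp hω hij,
        hωπ, mul_comm]
    exact hna.disjoint_setOf_apply_sub_le (hdist ▸ hπt2) (hdist ▸ hπt2)
  · have hdist : v (ζ * (ζ ^ p) ^ (i : ℕ) - (s + t * (ζ ^ p) ^ (j : ℕ))) = 1 := by
      rw [← hs1, v.map_sub s]
      refine hna.apply_sub_eq_of_apply_sub_lt ?_ ?_
      · rw [v.map_sub 1, hs1]; exact apply_mul_pow_pow_sub_one_lt_one hna hζ i
      · rw [apply_add_mul_pow_pow_sub_self hp.ne_zero hω, v.map_sub 1, hs1]; exact ht1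
    exact hna.disjoint_setOf_apply_sub_le (hdist ▸ hπt.trans hπ1)
      (hdist ▸ (hπt2.trans hπt).trans hπ1)

end SchottkyFigure

theorem schottky_figure_discs_pairwise_disjoint_general {F : Type*} [Field F]
    (v : AbsoluteValue F ℝ) (hna : IsNonarchimedean v)
    (p : ℕ) (hp : p.Prime) (π ζ s t β β' : F)
    (hω_pow : (ζ ^ p) ^ p = 1)
    (hζ : v (1 - ζ) < 1)
    (hπ0 : 0 < v π) (hπ1 : v π < 1) (hωπ : v (1 - ζ ^ p) = v π)
    (ht : v t ^ p = v π)
    (hs : v s = 1) (hs1 : v (s - 1) = 1)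
    (hβ : v β ≤ v π ^ 5) (hβ' : v β' ≤ v π ^ 5)
    (D : Fin 4 → Fin p → Set F)
    (hD0 : ∀ i : Fin p, D 0 i = {z : F | v (z - ζ * (ζ ^ p) ^ (i : ℕ)) ≤ v π * v t})
    (hD1 : ∀ i : Fin p, D 1 i =
      {z : F | v (z - π * (ζ * (ζ ^ p) ^ (i : ℕ))) ≤ v β * (v π * v t)⁻¹})
    (hD2 : ∀ i : Fin p, D 2 i =
      {z : F | v (z - (s + t * (ζ ^ p) ^ (i : ℕ))) ≤ v π * v t ^ 2})
    (hD3 : ∀ i : Fin p, D 3 i =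
      {z : F | v (z - π * (s + t * (ζ ^ p) ^ (i : ℕ))) ≤ v β' * (v π * v t ^ 2)⁻¹}) :
    ∀ a b : Fin 4, ∀ i j : Fin p, (a, i) ≠ (b, j) → Disjoint (D a i) (D b j) := by
  have hπ : π ≠ 0 := v.pos_iff.mp hπ0
  have ht0 : 0 < v t := lt_of_pow_lt_pow_left₀ p (v.nonneg t) (by rwa [ht, zero_pow hp.ne_zero])
  have ht1 : v t < 1 := (pow_lt_one_iff_of_nonneg (v.nonneg t) hp.ne_zero).mp (ht ▸ hπ1)
  have hπt2 : v π ≤ v t ^ 2 := ht ▸ pow_le_pow_of_le_one (v.nonneg t) ht1.le hp.two_le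
  have hπt : v π ≤ v t := hπt2.trans (pow_le_of_le_one (v.nonneg t) ht1.le two_ne_zero)
  have hU : Sum.elim (D 0) (D 2) = schottkyUnitDiscs v p π ζ s t := funext <| Sum.rec hD0 hD2
  have hV : ∀ k, Sum.elim (D 1) (D 3) k ⊆ (π * ·) '' Sum.elim (D 0) (D 2) k := by
    rw [hU]
    rintro (i | i)
    · rw [Sum.elim_inl, hD1]
      exact v.setOf_apply_sub_mul_le_subset_image hπ _ (mul_inv_le_mul_of_le_pow_five hπ0 hπt hβ)
    · rw [Sum.elim_inr, hD3]
      exact v.setOf_apply_sub_mul_le_subset_image hπ _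
        (mul_inv_le_mul_of_le_pow_five hπ0 hπt2 hβ')
  have hfigure := v.pairwise_disjoint_sum_elim_of_subset_image_mul hπ hπ1.ne
    (hU ▸ pairwise_disjoint_schottkyUnitDiscs hna hp hω_pow hζ hπ0 hπ1 hωπ ht0 ht1 hs1)
    (hU ▸ schottkyUnitDiscs_subset_sphere hna hp.ne_zero hω_pow hζ hπ1 ht1 hs) hV
  intro a b i j hne
  let e : Fin 4 → Fin p → (Fin p ⊕ Fin p) ⊕ (Fin p ⊕ Fin p) :=
    ![.inl ∘ .inl, .inr ∘ .inl, .inl ∘ .inr, .inr ∘ .inr]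
  have he : e a i ≠ e b j := by
    revert hne
    fin_cases a <;> fin_cases b <;> simp [e]
  fin_cases a <;> fin_cases b <;> exact hfigure he

/-- Under the hypotheses of the genus-`2p` example
(`ω = ζ^p` is a primitive `p`-th root of unity, `|1 - ζ| < 1`, `0 < |π| < 1`,
`|1 - ω| = |π|`, `|t|^p = |π|`, `|s| = |s - 1| = 1`, `0 < |β|, |β'| ≤ |π|^5`),
the `4p` closed discs of centers `cᵢ = ζ ωⁱ`, `π cᵢ`, `dᵢ = s + t ωⁱ`, `π dᵢ` and radii
`|π||t|`, `|β|(|π||t|)⁻¹`, `|π||t|²`, `|β'|(|π||t|²)⁻¹` are pairwise disjoint. -/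
theorem schottky_figure_discs_pairwise_disjoint {F : Type*} [Field F]
    (v : AbsoluteValue F ℝ) (hna : IsNonarchimedean v)
    (p : ℕ) (hp : p.Prime) (π ζ s t β β' : F)
    (hω_pow : (ζ ^ p) ^ p = 1) (hω_prim : ∀ k : ℕ, 0 < k → k < p → (ζ ^ p) ^ k ≠ 1)
    (hζ : v (1 - ζ) < 1)
    (hπ0 : 0 < v π) (hπ1 : v π < 1) (hωπ : v (1 - ζ ^ p) = v π)
    (ht : v t ^ p = v π)
    (hs : v s = 1) (hs1 : v (s - 1) = 1)
    (hβ0 : 0 < v β) (hβ : v β ≤ v π ^ 5) (hβ'0 : 0 < v β') (hβ' : v β' ≤ v π ^ 5)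
    (D : Fin 4 → Fin p → Set F)
    (hD0 : ∀ i : Fin p, D 0 i = {z : F | v (z - ζ * (ζ ^ p) ^ (i : ℕ)) ≤ v π * v t})
    (hD1 : ∀ i : Fin p, D 1 i =
      {z : F | v (z - π * (ζ * (ζ ^ p) ^ (i : ℕ))) ≤ v β * (v π * v t)⁻¹})
    (hD2 : ∀ i : Fin p, D 2 i =
      {z : F | v (z - (s + t * (ζ ^ p) ^ (i : ℕ))) ≤ v π * v t ^ 2})
    (hD3 : ∀ i : Fin p, D 3 i =
      {z : F | v (z - π * (s + t * (ζ ^ p) ^ (i : ℕ))) ≤ v β' * (v π * v t ^ 2)⁻¹}) :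
    ∀ a b : Fin 4, ∀ i j : Fin p, (a, i) ≠ (b, j) → Disjoint (D a i) (D b j) :=
  schottky_figure_discs_pairwise_disjoint_general v hna p hp π ζ s t β β' hω_pow hζ hπ0 hπ1 hωπ ht
    hs hs1 hβ hβ' D hD0 hD1 hD2 hD3
end

section
/- Let $p$ be a prime, and let $F$ be a field with a nonarchimedean absolute value $|\cdot|$. Let $\pi, \zeta, s, t, \beta, \beta' \in F$ satisfy: $\omega := \zeta^p$ is a primitive $p$-th root of unity; $|1 - \zeta| < 1$; $0 < |\pi| < 1$ and $|1 - \omega| = |\pi|$; $|t|^p = |\pi|$; $|s| = |s-1| = 1$; and $0 < |\beta| \le |\pi|^5$, $0 < |\beta'| \le |\pi|^5$. For $0 \le i \le p-1$ set $c_i = \zeta\omega^i$, $d_i = s + t\omega^i$, and define the matrices $A_i = \begin{pmatrix} (1 - \beta\pi) c_i & (\beta - 1)\pi c_i^2 \\ 1 - \beta & (\beta - \pi) c_i \end{pmatrix}$ and $B_i = \begin{pmatrix} (1 - \beta'\pi) d_i & (\beta' - 1)\pi d_i^2 \\ 1 - \beta' & (\beta' - \pi) d_i \end{pmatrix}$ in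 $GL_2(F)$. Then the images of $A_0, \dots, A_{p-1}, B_0, \dots, B_{p-1}$ in $PGL_2(F) = GL_2(F)/\mathrm{center}$ generate a free group of rank $2p$; equivalently, the group homomorphism from the free group on $2p$ generators to $GL_2(F)/\mathrm{center}$ sending the generators to the classes of these $2p$ matrices is injective. -/
/-!
Each generator is, up to a scalar, the loxodromic Möbius transformation `T` with attracting fixed
point `c`, repelling fixed point `π c` and multiplier `β`, so that
`T z - c = β (c - π c) (z - c) / ((z - π c) - β (z - c))`. The ultrametric inequality then shows
that `T` maps the complement of the disc of radius `|π|³` about `π c` into the disc of radius `|π|²`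
about `c`, and that `T⁻¹` does the reverse; this only needs `|β| ≤ |π|² · |π|³`. The points
`ζ ωⁱ` and `s + t ωⁱ` are units more than `|π|²` apart (`|ωⁱ - ωʲ| = |1 - ω| = |π|` and
`|π| < |t|`), so the `4p` discs are pairwise disjoint and the ping-pong lemma applies.
-/

open scoped LinearAlgebra.Projectivization MatrixGroups Pointwise
open Matrix Projectivization

universe u

section Schottky

variable {F : Type u} [Field F] {v : AbsoluteValue F ℝ}

lemma IsNonarchimedean.apply_sub_le (hna : IsNonarchimedean v) (x y : F) :
    v (x - y) ≤ max (v x) (v y) := by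
  simpa [sub_eq_add_neg] using hna x (-y)

lemma IsNonarchimedean.apply_sub_eq_left_of_lt (hna : IsNonarchimedean v) {x y : F}
    (h : v y < v x) : v (x - y) = v x := by
  rw [sub_eq_add_neg, hna.add_eq_left_of_lt (by rwa [map_neg_eq_map])]

lemma IsNonarchimedean.apply_eq_one_of_apply_one_sub_lt_one_s17 (hna : IsNonarchimedean v) {x : F}
    (h : v (1 - x) < 1) : v x = 1 := by
  simpa using hna.apply_sub_eq_left_of_lt (x := 1) (y := 1 - x) (by simpa using h)

lemma IsNonarchimedean.apply_sub_add_eq_one (hna : IsNonarchimedean v) {x s y : F}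
    (hx : v (1 - x) < 1) (hs : v (s - 1) = 1) (hy : v y < 1) : v (x - (s + y)) = 1 := by
  have hxy : v ((1 - x) + y) < v (1 - s) := by
    rw [v.map_sub, hs]; exact (hna _ _).trans_lt (max_lt hx hy)
  rw [show x - (s + y) = (1 - s) - ((1 - x) + y) by ring, hna.apply_sub_eq_left_of_lt hxy,
    v.map_sub, hs]

lemma IsNonarchimedean.apply_one_sub_pow_le_s17 (hna : IsNonarchimedean v) {x : F} (hx : v x ≤ 1)
    (n : ℕ) : v (1 - x ^ n) ≤ v (1 - x) := by
  induction n with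
  | zero => simp
  | succ n ih =>
    calc v (1 - x ^ (n + 1)) = v ((1 - x ^ n) * x + (1 - x)) := by ring_nf
      _ ≤ max (v (1 - x ^ n) * v x) (v (1 - x)) := by rw [← map_mul]; exact hna _ _
      _ ≤ v (1 - x) := max_le ((mul_le_of_le_one_right (v.nonneg _) hx).trans ih) le_rfl

lemma IsPrimitiveRoot.apply_eq_one {ω : F} {p : ℕ} (hω : IsPrimitiveRoot ω p) (hp : p ≠ 0) :
    v ω = 1 :=
  (pow_eq_one_iff_of_nonneg (v.nonneg ω) hp).mp (by rw [← map_pow, hω.pow_eq_one, map_one])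

lemma IsPrimitiveRoot.apply_one_sub_pow (hna : IsNonarchimedean v) {ω : F} {p : ℕ}
    (hω : IsPrimitiveRoot ω p) (hp : p ≠ 0) {k : ℕ} (hk : k.Coprime p) :
    v (1 - ω ^ k) = v (1 - ω) := by
  have : NeZero p := ⟨hp⟩
  have hvω : v ω = 1 := hω.apply_eq_one hp
  obtain ⟨m, -, hm⟩ := (hω.pow_of_coprime k hk).eq_pow_of_pow_eq_one hω.pow_eq_one
  refine le_antisymm (hna.apply_one_sub_pow_le_s17 hvω.le k) ?_
  conv_lhs => rw [← hm]
  exact hna.apply_one_sub_pow_le_s17 (by rw [map_pow, hvω, one_pow]) m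

lemma IsPrimitiveRoot.apply_pow_sub_pow (hna : IsNonarchimedean v) {ω : F} {p : ℕ}
    (hω : IsPrimitiveRoot ω p) (hp : p.Prime) {i j : ℕ} (hi : i < p) (hj : j < p) (hij : i ≠ j) :
    v (ω ^ i - ω ^ j) = v (1 - ω) := by
  wlog hji : j < i generalizing i j
  · rw [v.map_sub]; exact this hj hi hij.symm (by omega)
  have hcop : (i - j).Coprime p := (Nat.coprime_of_lt_prime (by omega) (by omega) hp).symm
  rw [show ω ^ i - ω ^ j = -(ω ^ j * (1 - ω ^ (i - j))) by
      rw [mul_sub, ← pow_add, Nat.add_sub_cancel' hji.le]; ring,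
    map_neg_eq_map, map_mul, map_pow, hω.apply_eq_one hp.ne_zero, one_pow, one_mul,
    hω.apply_one_sub_pow hna hp.ne_zero hcop]

lemma IsPrimitiveRoot.apply_mul_pow_sub_mul_pow (hna : IsNonarchimedean v) {ω : F} {p : ℕ}
    (hω : IsPrimitiveRoot ω p) (hp : p.Prime) (x : F) {i j : ℕ} (hi : i < p) (hj : j < p)
    (hij : i ≠ j) : v (x * ω ^ i - x * ω ^ j) = v x * v (1 - ω) := by
  rw [← mul_sub, map_mul, hω.apply_pow_sub_pow hna hp hi hj hij]

variable (v) in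
/-- The disc `{z | v (z - c) ≤ r}` of the chart `z ↦ [z : 1]`, as a subset of the projective
line; it never contains `[1 : 0]`. -/
def projDisc (c : F) (r : ℝ) : Set (ℙ F (Fin 2 → F)) :=
  {x | v (x.rep 0 - c * x.rep 1) ≤ r * v (x.rep 1)}

lemma mk_mem_projDisc_iff {c : F} {r : ℝ} {q : Fin 2 → F} (hq : q ≠ 0) :
    mk F q hq ∈ projDisc v c r ↔ v (q 0 - c * q 1) ≤ r * v (q 1) := by
  obtain ⟨k, hk⟩ := exists_smul_eq_mk_rep F q hq
  simp only [projDisc, Set.mem_ofPred_eq, ← hk, Units.smul_def, Pi.smul_apply, smul_eq_mul,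
    mul_left_comm c, ← mul_sub, map_mul, mul_left_comm r]
  exact mul_le_mul_iff_right₀ (v.pos k.ne_zero)

lemma projDisc_nonempty {c : F} {r : ℝ} (hr : 0 ≤ r) : (projDisc v c r).Nonempty :=
  ⟨mk F ![c, 1] (by simp), by simpa [mk_mem_projDisc_iff] using hr⟩

lemma disjoint_projDisc (hna : IsNonarchimedean v) {c c' : F} {r r' : ℝ}
    (h : max r r' < v (c - c')) : Disjoint (projDisc v c r) (projDisc v c' r') := by
  refine Set.disjoint_left.mpr fun x hx hx' => ?_
  simp only [projDisc, Set.mem_ofPred_eq] at hx hx'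
  set u := x.rep 0
  set w := x.rep 1
  have hle : v (c - c') * v w ≤ max r r' * v w := by
    calc v (c - c') * v w = v ((u - c' * w) - (u - c * w)) := by rw [← map_mul]; ring_nf
      _ ≤ max (v (u - c' * w)) (v (u - c * w)) := hna.apply_sub_le _ _
      _ ≤ max r r' * v w := by
        rw [max_comm, max_mul_of_nonneg _ _ (v.nonneg w)]; exact max_le_max hx hx'
  have hw : w ≠ 0 := by
    intro hw
    have hu : u = 0 := v.eq_zero.mp (le_antisymm (by simpa [hw] using hx) (v.nonneg u))
    exact x.rep_nonzero (by ext i; fin_cases i <;> assumption)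
  exact (h.trans_le (le_of_mul_le_mul_right hle (v.pos hw))).false

/-- The Möbius transformation `T` with `(T z - a) / (T z - b) = β (z - a) / (z - b)`. -/
def loxodromic (a b β : F) : Matrix (Fin 2) (Fin 2) F :=
  !![a - β * b, (β - 1) * a * b; 1 - β, β * a - b]

lemma loxodromic_mul_self (c π β : F) :
    loxodromic c (π * c) β = !![(1 - β * π) * c, (β - 1) * π * c ^ 2; 1 - β, (β - π) * c] := by
  ext i j; fin_cases i <;> fin_cases j <;> simp [loxodromic] <;> ring

lemma adjugate_loxodromic (a b β : F) : adjugate (loxodromic a b β) = -loxodromic b a β := by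
  ext i j; fin_cases i <;> fin_cases j <;> simp [loxodromic, adjugate_fin_two]; ring

lemma loxodromic_mulVec_sub (a b β : F) (q : Fin 2 → F) :
    (loxodromic a b β *ᵥ q) 0 - a * (loxodromic a b β *ᵥ q) 1 =
      β * (a - b) * (q 0 - a * q 1) := by
  simp [loxodromic, mulVec, dotProduct, Fin.sum_univ_two]; ring

lemma loxodromic_mulVec_one (a b β : F) (q : Fin 2 → F) :
    (loxodromic a b β *ᵥ q) 1 = (q 0 - b * q 1) - β * (q 0 - a * q 1) := by
  simp [loxodromic, mulVec, dotProduct, Fin.sum_univ_two]; ring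

lemma apply_loxodromic_mulVec_le (hna : IsNonarchimedean v) {a b β : F} {r r' : ℝ}
    (hβ : v β < 1) (hr : v β * v (a - b) ≤ r) (hr' : v β * v (a - b) ≤ r')
    (hrr' : v β * v (a - b) ^ 2 ≤ r * r') {q : Fin 2 → F} (hq : r' * v (q 1) < v (q 0 - b * q 1)) :
    v ((loxodromic a b β *ᵥ q) 0 - a * (loxodromic a b β *ᵥ q) 1) ≤
      r * v ((loxodromic a b β *ᵥ q) 1) := by
  rw [loxodromic_mulVec_sub, loxodromic_mulVec_one]
  set X := q 0 - a * q 1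
  set Y := q 0 - b * q 1
  set w := q 1
  set d := v (a - b)
  have hr0 : 0 ≤ r := (mul_nonneg (v.nonneg _) (v.nonneg _)).trans hr
  have hr'0 : 0 ≤ r' := (mul_nonneg (v.nonneg _) (v.nonneg _)).trans hr'
  have hY : 0 < v Y := (mul_nonneg hr'0 (v.nonneg _)).trans_lt hq
  have hX : v X ≤ max (v Y) (d * v w) := by
    rw [show X = Y - (a - b) * w by ring, ← map_mul]
    exact hna.apply_sub_le _ _
  have hβX : v (β * X) < v Y := by
    rw [map_mul]
    calc v β * v X ≤ max (v β * v Y) (v β * d * v w) := by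
          rw [mul_assoc, ← mul_max_of_nonneg _ _ (v.nonneg β)]
          exact mul_le_mul_of_nonneg_left hX (v.nonneg β)
      _ < v Y := max_lt (mul_lt_of_lt_one_left hY hβ)
          ((mul_le_mul_of_nonneg_right hr' (v.nonneg w)).trans_lt hq)
  rw [hna.apply_sub_eq_left_of_lt hβX, map_mul, map_mul]
  calc v β * d * v X ≤ max (v β * d * v Y) (v β * d ^ 2 * v w) := by
        rw [sq, ← mul_assoc, mul_assoc _ d (v w), ← mul_max_of_nonneg _ _ (by positivity)]
        exact mul_le_mul_of_nonneg_left hX (by positivity)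
    _ ≤ r * v Y := by
      refine max_le (mul_le_mul_of_nonneg_right hr hY.le) ?_
      calc v β * d ^ 2 * v w ≤ r * r' * v w := mul_le_mul_of_nonneg_right hrr' (v.nonneg w)
        _ ≤ r * v Y := by rw [mul_assoc]; exact mul_le_mul_of_nonneg_left hq.le hr0

lemma smul_mem_projDisc_of_coe_eq (hna : IsNonarchimedean v) {a b β : F} {r r' : ℝ}
    (hβ : v β < 1) (hr : v β * v (a - b) ≤ r) (hr' : v β * v (a - b) ≤ r')
    (hrr' : v β * v (a - b) ^ 2 ≤ r * r') {g : GL (Fin 2) F} {k : F}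
    (hg : (g : Matrix (Fin 2) (Fin 2) F) = k • loxodromic a b β) {x : ℙ F (Fin 2 → F)}
    (hx : x ∉ projDisc v b r') : g • x ∈ projDisc v a r := by
  rw [← x.mk_rep, smul_mk, mk_mem_projDisc_iff, Units.smul_def, hg, smul_eq_mulVec, smul_mulVec]
  simp only [Pi.smul_apply, smul_eq_mul, mul_left_comm a, ← mul_sub, map_mul, mul_left_comm r]
  exact mul_le_mul_of_nonneg_left (apply_loxodromic_mulVec_le hna hβ hr hr' hrr' (not_le.mp hx))
    (v.nonneg k)

lemma inv_smul_mem_projDisc_of_coe_eq (hna : IsNonarchimedean v) {a b β : F} {r r' : ℝ}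
    (hβ : v β < 1) (hr : v β * v (a - b) ≤ r) (hr' : v β * v (a - b) ≤ r')
    (hrr' : v β * v (a - b) ^ 2 ≤ r * r') {g : GL (Fin 2) F} {k : F}
    (hg : (g : Matrix (Fin 2) (Fin 2) F) = k • loxodromic a b β) {x : ℙ F (Fin 2 → F)}
    (hx : x ∉ projDisc v a r) : g⁻¹ • x ∈ projDisc v b r' := by
  rw [v.map_sub] at hr hr' hrr'
  refine smul_mem_projDisc_of_coe_eq hna hβ hr' hr (by rwa [mul_comm r'])
    (k := -(Ring.inverse (g : Matrix (Fin 2) (Fin 2) F).det * k)) ?_ hx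
  rw [coe_units_inv, inv_def, hg, adjugate_smul, adjugate_loxodromic]
  simp [smul_smul]

lemma FreeGroup.injective_lift_of_injective_lift_comp {α β G : Type*} [Group G] (e : α ≃ β)
    {f : β → G} (h : Function.Injective (FreeGroup.lift (f ∘ e))) :
    Function.Injective (FreeGroup.lift f) := by
  have hf : FreeGroup.lift f = (FreeGroup.lift (f ∘ e)).comp (FreeGroup.map e.symm) :=
    FreeGroup.ext_hom _ _ fun x => by simp
  rw [hf, MonoidHom.coe_comp]
  exact h.comp (FreeGroup.map_injective e.symm.injective)

theorem injective_lift_of_coe_eq_loxodromic {ι : Type u} [Nontrivial ι] (hna : IsNonarchimedean v)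
    {π : F} (hπ0 : 0 < v π) (hπ1 : v π < 1) {c β : ι → F} (hc : ∀ i, v (c i) = 1)
    (hsep : Pairwise fun i j => v π ^ 2 < v (c i - c j)) (hβ : ∀ i, v (β i) ≤ v π ^ 5)
    {g : ι → GL (Fin 2) F}
    (hg : ∀ i, (g i : Matrix (Fin 2) (Fin 2) F) = loxodromic (c i) (π * c i) (β i)) :
    Function.Injective (FreeGroup.lift fun i => ProjGenLinGroup.mk (g i)) := by
  have hπc : ∀ i j, v (π * c j) < v (c i) := fun i j => by rwa [map_mul, hc, hc, mul_one]
  have hd : ∀ i, v (c i - π * c i) = 1 := fun i => by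
    rw [hna.apply_sub_eq_left_of_lt (hπc i i), hc]
  have hπpow : ∀ {m n : ℕ}, m ≤ n → v π ^ n ≤ v π ^ m := fun h =>
    pow_le_pow_of_le_one hπ0.le hπ1.le h
  have hβ1 : ∀ i, v (β i) < 1 := fun i => (hβ i).trans_lt (pow_lt_one₀ hπ0.le hπ1 (by norm_num))
  have hr : ∀ i, v (β i) * v (c i - π * c i) ≤ v π ^ 2 := fun i => by
    rw [hd, mul_one]; exact (hβ i).trans (hπpow (by norm_num))
  have hr' : ∀ i, v (β i) * v (c i - π * c i) ≤ v π ^ 3 := fun i => by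
    rw [hd, mul_one]; exact (hβ i).trans (hπpow (by norm_num))
  have hrr' : ∀ i, v (β i) * v (c i - π * c i) ^ 2 ≤ v π ^ 2 * v π ^ 3 := fun i => by
    rw [hd, one_pow, mul_one, ← pow_add]; exact hβ i
  refine FreeGroup.injective_lift_of_ping_pong (fun i => ProjGenLinGroup.mk (g i))
    (fun i => projDisc v (c i) (v π ^ 2)) (fun i => projDisc v (π * c i) (v π ^ 3))
    (fun i => projDisc_nonempty (by positivity))
    (fun i j hij => disjoint_projDisc hna (by rw [max_self]; exact hsep hij))
    (fun i j hij => disjoint_projDisc hna ?_) (fun i j => disjoint_projDisc hna ?_)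
    (fun i => ?_) (fun i => ?_)
  · rw [max_self, ← mul_sub, map_mul, pow_succ']
    exact mul_lt_mul_of_pos_left (hsep hij) hπ0
  · rw [hna.apply_sub_eq_left_of_lt (hπc i j), hc]
    exact max_lt (pow_lt_one₀ hπ0.le hπ1 (by norm_num)) (pow_lt_one₀ hπ0.le hπ1 (by norm_num))
  · refine Set.smul_set_subset_iff.mpr fun x hx => ?_
    exact smul_mem_projDisc_of_coe_eq hna (hβ1 i) (hr i) (hr' i) (hrr' i) (k := 1)
      (by rw [hg, one_smul]) hx
  · refine Set.smul_set_subset_iff.mpr fun x hx => ?_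
    rw [Pi.inv_apply, ← map_inv]
    exact inv_smul_mem_projDisc_of_coe_eq hna (hβ1 i) (hr i) (hr' i) (hrr' i) (k := 1)
      (by rw [hg, one_smul]) hx

lemma pairwise_lt_apply_sub_sumElim {ι κ : Type*} {c : ι → F} {d : κ → F} {ρ : ℝ}
    (hc : Pairwise fun i j => ρ < v (c i - c j)) (hd : Pairwise fun i j => ρ < v (d i - d j))
    (hcd : ∀ i j, ρ < v (c i - d j)) :
    Pairwise fun i j => ρ < v (Sum.elim c d i - Sum.elim c d j) := by
  rintro (i | i) (j | j) hij
  · exact hc (fun h => hij (congrArg _ h))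
  · exact hcd i j
  · rw [v.map_sub]; exact hcd j i
  · exact hd (fun h => hij (congrArg _ h))

lemma lt_and_lt_one_of_pow_eq {a b : ℝ} {n : ℕ} (ha : 0 ≤ a) (h : a ^ n = b) (hb0 : 0 < b)
    (hb1 : b < 1) (hn : 1 < n) : b < a ∧ a < 1 := by
  have ha1 : a < 1 := (pow_lt_one_iff_of_nonneg ha (by omega)).mp (h ▸ hb1)
  have ha0 : 0 < a := lt_of_pow_lt_pow_left₀ n ha (by rw [h, zero_pow (by omega)]; exact hb0)
  exact ⟨h ▸ pow_lt_self_of_lt_one₀ ha0 ha1 hn, ha1⟩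

def attractingPoints (p : ℕ) (ζ ω s t : F) : Fin p ⊕ Fin p → F :=
  Sum.elim (fun i => ζ * ω ^ (i : ℕ)) (fun i => s + t * ω ^ (i : ℕ))

lemma apply_attractingPoints (hna : IsNonarchimedean v) {p : ℕ} {ζ ω s t : F}
    (hω : IsPrimitiveRoot ω p) (hp : p ≠ 0) (hζ : v (1 - ζ) < 1) (hs : v s = 1) (ht : v t < 1)
    (i : Fin p ⊕ Fin p) : v (attractingPoints p ζ ω s t i) = 1 := by
  rcases i with i | i
  · simp [attractingPoints, hna.apply_eq_one_of_apply_one_sub_lt_one_s17 hζ, hω.apply_eq_one hp]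
  · rw [attractingPoints, Sum.elim_inr, hna.add_eq_left_of_lt (by
      rwa [map_mul, map_pow, hω.apply_eq_one hp, one_pow, mul_one, hs]), hs]

lemma pairwise_lt_apply_sub_attractingPoints (hna : IsNonarchimedean v) {p : ℕ} {π ζ ω s t : F}
    (hp : p.Prime) (hω : IsPrimitiveRoot ω p) (hζ : v (1 - ζ) < 1) (hπ0 : 0 < v π)
    (hπ1 : v π < 1) (hωπ : v (1 - ω) = v π) (hπt : v π < v t) (ht : v t < 1)
    (hs : v (s - 1) = 1) :
    Pairwise fun i j =>
      v π ^ 2 < v (attractingPoints p ζ ω s t i - attractingPoints p ζ ω s t j) := by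
  have hvω : v ω = 1 := hω.apply_eq_one hp.ne_zero
  have hcd : ∀ i j : ℕ, v (ζ * ω ^ i - (s + t * ω ^ j)) = 1 := fun i j => by
    refine hna.apply_sub_add_eq_one ?_ hs (by rwa [map_mul, map_pow, hvω, one_pow, mul_one])
    rw [show 1 - ζ * ω ^ i = (1 - ζ) * ω ^ i + (1 - ω ^ i) by ring]
    refine (hna _ _).trans_lt (max_lt (by rwa [map_mul, map_pow, hvω, one_pow, mul_one]) ?_)
    exact (hna.apply_one_sub_pow_le_s17 hvω.le i).trans_lt (by rw [hωπ]; exact hπ1)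
  refine pairwise_lt_apply_sub_sumElim (fun i j hij => ?_) (fun i j hij => ?_)
    (fun i j => by rw [hcd]; exact pow_lt_one₀ hπ0.le hπ1 two_ne_zero)
  · beta_reduce
    rw [hω.apply_mul_pow_sub_mul_pow hna hp ζ i.isLt j.isLt (Fin.val_ne_of_ne hij),
      hna.apply_eq_one_of_apply_one_sub_lt_one_s17 hζ, one_mul, hωπ]
    exact pow_lt_self_of_lt_one₀ hπ0 hπ1 one_lt_two
  · beta_reduce
    rw [add_sub_add_left_eq_sub,
      hω.apply_mul_pow_sub_mul_pow hna hp t i.isLt j.isLt (Fin.val_ne_of_ne hij), hωπ, sq]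
    exact mul_lt_mul_of_pos_right hπt hπ0

end Schottky

theorem genus_two_p_schottky_group_free_general {F : Type*} [Field F]
    (v : AbsoluteValue F ℝ) (hna : IsNonarchimedean v)
    (p : ℕ) (hp : p.Prime) (π ζ s t β β' : F)
    (hω_pow : (ζ ^ p) ^ p = 1) (hω_prim : ∀ k : ℕ, 0 < k → k < p → (ζ ^ p) ^ k ≠ 1)
    (hζ : v (1 - ζ) < 1)
    (hπ0 : 0 < v π) (hπ1 : v π < 1) (hωπ : v (1 - ζ ^ p) = v π)
    (ht : v t ^ p = v π)
    (hs : v s = 1) (hs1 : v (s - 1) = 1)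
    (hβ : v β ≤ v π ^ 5) (hβ' : v β' ≤ v π ^ 5)
    (gA gB : Fin p → (Matrix (Fin 2) (Fin 2) F)ˣ)
    (hgA : ∀ i : Fin p, (gA i : Matrix (Fin 2) (Fin 2) F) =
      !![(1 - β * π) * (ζ * (ζ ^ p) ^ (i : ℕ)), (β - 1) * π * (ζ * (ζ ^ p) ^ (i : ℕ)) ^ 2;
         1 - β, (β - π) * (ζ * (ζ ^ p) ^ (i : ℕ))])
    (hgB : ∀ i : Fin p, (gB i : Matrix (Fin 2) (Fin 2) F) =
      !![(1 - β' * π) * (s + t * (ζ ^ p) ^ (i : ℕ)), (β' - 1) * π * (s + t * (ζ ^ p) ^ (i : ℕ)) ^ 2;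
         1 - β', (β' - π) * (s + t * (ζ ^ p) ^ (i : ℕ))]) :
    Function.Injective
      ((QuotientGroup.mk' (Subgroup.center (Matrix (Fin 2) (Fin 2) F)ˣ)).comp
        (FreeGroup.lift (Sum.elim gA gB : Fin p ⊕ Fin p → (Matrix (Fin 2) (Fin 2) F)ˣ))) := by
  set ω := ζ ^ p
  have hω : IsPrimitiveRoot ω p := IsPrimitiveRoot.mk_of_lt ω hp.pos hω_pow hω_prim
  obtain ⟨hπt, ht1⟩ := lt_and_lt_one_of_pow_eq (v.nonneg t) ht hπ0 hπ1 hp.one_lt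
  have : Nontrivial (Fin p ⊕ Fin p) := ⟨⟨.inl ⟨0, hp.pos⟩, .inr ⟨0, hp.pos⟩, Sum.inl_ne_inr⟩⟩
  have hlift : (QuotientGroup.mk' (Subgroup.center (Matrix (Fin 2) (Fin 2) F)ˣ)).comp
      (FreeGroup.lift (Sum.elim gA gB)) =
      FreeGroup.lift fun i => ProjGenLinGroup.mk (Sum.elim gA gB i) :=
    FreeGroup.ext_hom _ _ fun _ => rfl
  rw [hlift]
  -- `FreeGroup.injective_lift_of_ping_pong` wants the index type in the universe of the group.
  refine FreeGroup.injective_lift_of_injective_lift_comp Equiv.ulift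
    (injective_lift_of_coe_eq_loxodromic hna hπ0 hπ1
      (c := fun i => attractingPoints p ζ ω s t i.down)
      (β := fun i => Sum.elim (fun _ : Fin p => β) (fun _ : Fin p => β') i.down)
      (fun i => apply_attractingPoints hna hω hp.ne_zero hζ hs ht1 i.down)
      (fun i j hij => pairwise_lt_apply_sub_attractingPoints hna hp hω hζ hπ0 hπ1 hωπ hπt ht1 hs1
        fun h => hij (ULift.ext _ _ h))
      ?_ ?_)
  · rintro ⟨i | i⟩ <;> assumption
  · rintro ⟨i | i⟩ <;> simp only [attractingPoints, Sum.elim_inl, Sum.elim_inr,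
      Equiv.ulift_apply] <;> rw [loxodromic_mul_self]
    exacts [hgA i, hgB i]

/-- Under the hypotheses of the genus-`2p` example, the images in
`PGL₂(F) = GL₂(F)/center` of the `2p` matrices
`Aᵢ = !![(1 - βπ) cᵢ, (β - 1) π cᵢ²; 1 - β, (β - π) cᵢ]` and
`Bᵢ = !![(1 - β'π) dᵢ, (β' - 1) π dᵢ²; 1 - β', (β' - π) dᵢ]`
(with `cᵢ = ζ ωⁱ`, `dᵢ = s + t ωⁱ`, `ω = ζ^p`) generate a free group of rank `2p`:
the homomorphism from the free group on `2p` generators sending them to the classes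
of these matrices is injective. -/
theorem genus_two_p_schottky_group_free {F : Type*} [Field F]
    (v : AbsoluteValue F ℝ) (hna : IsNonarchimedean v)
    (p : ℕ) (hp : p.Prime) (π ζ s t β β' : F)
    (hω_pow : (ζ ^ p) ^ p = 1) (hω_prim : ∀ k : ℕ, 0 < k → k < p → (ζ ^ p) ^ k ≠ 1)
    (hζ : v (1 - ζ) < 1)
    (hπ0 : 0 < v π) (hπ1 : v π < 1) (hωπ : v (1 - ζ ^ p) = v π)
    (ht : v t ^ p = v π)
    (hs : v s = 1) (hs1 : v (s - 1) = 1)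
    (hβ0 : 0 < v β) (hβ : v β ≤ v π ^ 5) (hβ'0 : 0 < v β') (hβ' : v β' ≤ v π ^ 5)
    (gA gB : Fin p → (Matrix (Fin 2) (Fin 2) F)ˣ)
    (hgA : ∀ i : Fin p, (gA i : Matrix (Fin 2) (Fin 2) F) =
      !![(1 - β * π) * (ζ * (ζ ^ p) ^ (i : ℕ)), (β - 1) * π * (ζ * (ζ ^ p) ^ (i : ℕ)) ^ 2;
         1 - β, (β - π) * (ζ * (ζ ^ p) ^ (i : ℕ))])
    (hgB : ∀ i : Fin p, (gB i : Matrix (Fin 2) (Fin 2) F) =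
      !![(1 - β' * π) * (s + t * (ζ ^ p) ^ (i : ℕ)), (β' - 1) * π * (s + t * (ζ ^ p) ^ (i : ℕ)) ^ 2;
         1 - β', (β' - π) * (s + t * (ζ ^ p) ^ (i : ℕ))]) :
    Function.Injective
      ((QuotientGroup.mk' (Subgroup.center (Matrix (Fin 2) (Fin 2) F)ˣ)).comp
        (FreeGroup.lift (Sum.elim gA gB : Fin p ⊕ Fin p → (Matrix (Fin 2) (Fin 2) F)ˣ))) :=
  genus_two_p_schottky_group_free_general v hna p hp π ζ s t β β' hω_pow hω_prim hζ hπ0 hπ1 hωπ ht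
    hs hs1 hβ hβ' gA gB hgA hgB
end
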